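/- arXiv:2006.10332 — 11 statements merged into one kernel-verified Lean document; each statement's English description precedes it below -/
import Mathlib

section
/- Consider the energy sharing game with I ≥ 2 prosumers. If (p̂, d̂, b̂) is a generalized Nash equilibrium of the game, then (p̂, d̂) is the unique optimal solution of the regularized problem: minimize Σ_{i=1}^I f_i(p_i) − Σ_{i=1}^I u_i(d_i) + (Σ_{i=1}^I (d_i − p_i)²)/(2a(I−1)) subject to Σ_{i=1}^I p_i = Σ_{i=1}^I d_i and p̲_i ≤ p_i ≤ p̄_i, d̲_i ≤ d_i ≤ d̄_i for all i. -/
open Finset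

/-- Energy sharing price given bids. -/
noncomputable def price (I : ℕ) (a : ℝ) (b : Fin I → ℝ) : ℝ :=
  (∑ j, b j) / (a * I)

/-- Cost of prosumer `i` in the energy sharing game. -/
noncomputable def gamma (I : ℕ) (a : ℝ) (f u : Fin I → ℝ → ℝ) (i : Fin I)
    (p d b : Fin I → ℝ) : ℝ :=
  f i (p i) - u i (d i) + price I a b * (-(a * price I a b) + b i)

/-- Feasibility of prosumer `i`'s part of a profile. -/
def feasOf (I : ℕ) (a : ℝ) (plo phi dlo dhi : Fin I → ℝ) (i : Fin I)
    (p d b : Fin I → ℝ) : Prop :=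
  p i - a * price I a b + b i = d i ∧
    plo i ≤ p i ∧ p i ≤ phi i ∧ dlo i ≤ d i ∧ d i ≤ dhi i

/-- Generalized Nash equilibrium of the energy sharing game. -/
def IsGNE (I : ℕ) (a : ℝ) (f u : Fin I → ℝ → ℝ) (plo phi dlo dhi : Fin I → ℝ)
    (p d b : Fin I → ℝ) : Prop :=
  ∀ i : Fin I,
    feasOf I a plo phi dlo dhi i p d b ∧
    ∀ pi di bi : ℝ,
      feasOf I a plo phi dlo dhi i (Function.update p i pi)
        (Function.update d i di) (Function.update b i bi) →
      gamma I a f u i p d b ≤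
        gamma I a f u i (Function.update p i pi)
          (Function.update d i di) (Function.update b i bi)

/-- Feasible set of the centralized/regularized problem. -/
def centralFeas (I : ℕ) (plo phi dlo dhi : Fin I → ℝ) (p d : Fin I → ℝ) : Prop :=
  (∑ i, p i = ∑ i, d i) ∧
    ∀ i, plo i ≤ p i ∧ p i ≤ phi i ∧ dlo i ≤ d i ∧ d i ≤ dhi i

/-- Objective of the regularized central problem. -/
noncomputable def regObj (I : ℕ) (a : ℝ) (f u : Fin I → ℝ → ℝ)
    (p d : Fin I → ℝ) : ℝ :=
  ∑ i, f i (p i) - ∑ i, u i (d i) +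
    (∑ i, (d i - p i) ^ 2) / (2 * a * ((I : ℝ) - 1))

/-!
By changing its bid, prosumer `i` can reach any imbalance `w = d - p` while the others' bids stay
fixed; the price then moves from its equilibrium value `λ̂` to `λ̂ + (w - ŵᵢ) / (a (I - 1))`,
where `ŵᵢ = d̂ᵢ - p̂ᵢ`. So the equilibrium condition says that `(p̂ᵢ, d̂ᵢ)` minimizes
`fᵢ x - uᵢ y + (λ̂ + (w - ŵᵢ) / (a (I - 1))) w` over the box. Summing over `i` on the balanced
set `∑ w = 0`, where the price terms cancel, gives
`R (p̂, d̂) ≤ R (p, d) + ∑ (wᵢ - ŵᵢ)² / (2 a (I - 1))` for the regularized objective `R`.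
Along a segment issuing from `(p̂, d̂)` the error term is quadratic in the step while `R` is
convex, so the error term disappears in the limit; strict convexity of `R` then gives uniqueness.
-/

open Set Filter Topology

theorem StrictConvexOn.prod_add {E F : Type*} [AddCommGroup E] [Module ℝ E] [AddCommGroup F]
    [Module ℝ F] {s : Set E} {t : Set F} {f : E → ℝ} {g : F → ℝ}
    (hf : StrictConvexOn ℝ s f) (hg : StrictConvexOn ℝ t g) :
    StrictConvexOn ℝ (s ×ˢ t) fun z => f z.1 + g z.2 := by
  refine ⟨hf.1.prod hg.1, fun x hx y hy hxy α β hα hβ hαβ => ?_⟩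
  simp only [Prod.fst_add, Prod.snd_add, Prod.smul_fst, Prod.smul_snd, smul_add]
  by_cases h₁ : x.1 = y.1
  · have hf' := hf.convexOn.2 hx.1 hy.1 hα.le hβ.le hαβ
    have hg' := hg.2 hx.2 hy.2 (fun h₂ => hxy (Prod.ext h₁ h₂)) hα hβ hαβ
    linarith
  · have hf' := hf.2 hx.1 hy.1 h₁ hα hβ hαβ
    have hg' := hg.convexOn.2 hx.2 hy.2 hα.le hβ.le hαβ
    linarith

theorem ConvexOn.le_of_forall_le_add_sq_mul {E : Type*} [AddCommGroup E] [Module ℝ E]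
    {s : Set E} {F : E → ℝ} (hF : ConvexOn ℝ s F) {x₀ x : E} (hx₀ : x₀ ∈ s) (hx : x ∈ s) (Q : ℝ)
    (h : ∀ t ∈ Ioc (0 : ℝ) 1, F x₀ ≤ F (x₀ + t • (x - x₀)) + t ^ 2 * Q) : F x₀ ≤ F x := by
  have hlim : Tendsto (fun t : ℝ => F x + t * Q) (𝓝[>] 0) (𝓝 (F x + 0 * Q)) :=
    ((continuous_const.add (continuous_id.mul continuous_const)).tendsto 0).mono_left
      nhdsWithin_le_nhds
  have hev : ∀ᶠ t in 𝓝[>] (0 : ℝ), F x₀ ≤ F x + t * Q :=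
    eventually_of_mem (Ioc_mem_nhdsGT one_pos) fun t ht => by
      have hseg : x₀ + t • (x - x₀) = (1 - t) • x₀ + t • x := by
        rw [smul_sub, sub_smul, one_smul]; abel
      have hconv := hF.2 hx₀ hx (sub_nonneg.2 ht.2) ht.1.le (sub_add_cancel 1 t)
      rw [← hseg, smul_eq_mul, smul_eq_mul] at hconv
      have := h t ht
      refine le_of_mul_le_mul_left ?_ ht.1
      linarith
  simpa using ge_of_tendsto hlim hev

theorem strictConvexOn_pi_sum_apply {ι E : Type*} [Fintype ι] [AddCommGroup E] [Module ℝ E]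
    {s : ι → Set E} {g : ι → E → ℝ} (hg : ∀ i, StrictConvexOn ℝ (s i) (g i)) :
    StrictConvexOn ℝ (univ.pi s) fun x : ι → E => ∑ i, g i (x i) := by
  refine ⟨convex_pi fun i _ => (hg i).1, fun x hx y hy hxy α β hα hβ hαβ => ?_⟩
  obtain ⟨i, hi⟩ := Function.ne_iff.1 hxy
  simp only [Pi.add_apply, Pi.smul_apply, smul_eq_mul, Finset.mul_sum, ← Finset.sum_add_distrib]
  exact Finset.sum_lt_sum
    (fun j _ => (hg j).convexOn.2 (hx j trivial) (hy j trivial) hα.le hβ.le hαβ)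
    ⟨i, Finset.mem_univ i, (hg i).2 (hx i trivial) (hy i trivial) hi hα hβ hαβ⟩

section EnergySharing

variable {I : ℕ} {a : ℝ} {f u : Fin I → ℝ → ℝ} {plo phi dlo dhi : Fin I → ℝ}

theorem price_update (b : Fin I → ℝ) (i : Fin I) (x : ℝ) :
    price I a (Function.update b i x) = price I a b + (x - b i) / (a * I) := by
  simp only [price, Finset.sum_update_of_mem (Finset.mem_univ i), Finset.sdiff_singleton_eq_erase,
    Finset.sum_erase_eq_sub (Finset.mem_univ i)]
  ring

theorem gamma_eq_of_feasOf {i : Fin I} {p d b : Fin I → ℝ}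
    (h : feasOf I a plo phi dlo dhi i p d b) :
    gamma I a f u i p d b = f i (p i) - u i (d i) + price I a b * (d i - p i) := by
  rw [gamma, show -(a * price I a b) + b i = d i - p i by linarith [h.1]]

theorem exists_bid_update (ha : a ≠ 0) (hI : 2 ≤ I) (b : Fin I → ℝ) (i : Fin I) (w : ℝ) :
    ∃ x, -(a * price I a (Function.update b i x)) + x = w ∧
      price I a (Function.update b i x) =
        price I a b + (w - (b i - a * price I a b)) / (a * (I - 1)) := by
  have hI1 : (I : ℝ) - 1 ≠ 0 := by
    have : (2 : ℝ) ≤ I := by exact_mod_cast hI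
    linarith
  have hI0 : (I : ℝ) ≠ 0 := by positivity
  refine ⟨b i + I * (w - (b i - a * price I a b)) / (I - 1), ?_, ?_⟩ <;>
  · rw [price_update]
    field_simp
    ring

theorem IsGNE.to_centralFeas {p d b : Fin I → ℝ} (h : IsGNE I a f u plo phi dlo dhi p d b)
    (ha : a ≠ 0) (hI : I ≠ 0) : centralFeas I plo phi dlo dhi p d := by
  refine ⟨?_, fun i => (h i).1.2⟩
  have hsum : ∑ i, (p i - a * price I a b + b i) = ∑ i, d i :=
    Finset.sum_congr rfl fun i _ => (h i).1.1
  have hb : ∑ i, b i = a * I * price I a b := by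
    rw [price, mul_div_cancel₀ _ (by positivity)]
  simp only [Finset.sum_add_distrib, Finset.sum_sub_distrib, Finset.sum_const, Finset.card_univ,
    Fintype.card_fin, nsmul_eq_mul, hb] at hsum
  linarith

theorem IsGNE.cost_le_of_deviation {p d b : Fin I → ℝ} (h : IsGNE I a f u plo phi dlo dhi p d b)
    (ha : a ≠ 0) (hI : 2 ≤ I) (i : Fin I) {x y : ℝ} (hx : plo i ≤ x ∧ x ≤ phi i)
    (hy : dlo i ≤ y ∧ y ≤ dhi i) :
    f i (p i) - u i (d i) + price I a b * (d i - p i) ≤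
      f i x - u i y + (price I a b + ((y - x) - (d i - p i)) / (a * (I - 1))) * (y - x) := by
  obtain ⟨bi, hbal, hprice⟩ := exists_bid_update ha hI b i (y - x)
  have hfeas : feasOf I a plo phi dlo dhi i (Function.update p i x) (Function.update d i y)
      (Function.update b i bi) := by
    simp only [feasOf, Function.update_self]
    exact ⟨by linarith, hx.1, hx.2, hy.1, hy.2⟩
  have hle := (h i).2 x y bi hfeas
  rw [gamma_eq_of_feasOf (h i).1, gamma_eq_of_feasOf hfeas] at hle
  simp only [Function.update_self, hprice] at hle
  rwa [show b i - a * price I a b = d i - p i by linarith [(h i).1.1]] at hle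

noncomputable def regCost (I : ℕ) (a : ℝ) (f u : Fin I → ℝ → ℝ) (i : Fin I) (z : ℝ × ℝ) : ℝ :=
  f i z.1 - u i z.2 + (z.2 - z.1) ^ 2 / (2 * a * ((I : ℝ) - 1))

def centralFeasSet (I : ℕ) (plo phi dlo dhi : Fin I → ℝ) : Set (Fin I → ℝ × ℝ) :=
  {z | centralFeas I plo phi dlo dhi (fun i => (z i).1) (fun i => (z i).2)}

theorem regObj_eq_sum_regCost (p d : Fin I → ℝ) :
    regObj I a f u p d = ∑ i, regCost I a f u i (p i, d i) := by
  simp only [regObj, regCost, Finset.sum_add_distrib, Finset.sum_sub_distrib, Finset.sum_div]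

theorem strictConvexOn_regCost (ha : 0 ≤ a) (hI : 1 ≤ I) (i : Fin I)
    (hf : StrictConvexOn ℝ univ (f i)) (hu : StrictConcaveOn ℝ univ (u i)) :
    StrictConvexOn ℝ univ (regCost I a f u i) := by
  have hC : 0 ≤ (2 * a * ((I : ℝ) - 1))⁻¹ := by
    have : (1 : ℝ) ≤ I := by exact_mod_cast hI
    have : 0 ≤ 2 * a * ((I : ℝ) - 1) := by positivity
    positivity
  have hsq : ConvexOn ℝ univ fun z : ℝ × ℝ => (z.2 - z.1) ^ 2 :=
    (even_two.convexOn_pow (𝕜 := ℝ)).comp_linearMap (LinearMap.snd ℝ ℝ ℝ - LinearMap.fst ℝ ℝ ℝ)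
  have hq := hsq.smul hC
  have hsep := hf.prod_add hu.neg
  rw [univ_prod_univ] at hsep
  refine (hsep.add_convexOn hq).congr fun z _ => ?_
  simp only [regCost, Pi.add_apply, Pi.neg_apply, smul_eq_mul]
  ring

theorem strictConvexOn_sum_regCost (ha : 0 ≤ a) (hI : 1 ≤ I)
    (hf : ∀ i, StrictConvexOn ℝ univ (f i)) (hu : ∀ i, StrictConcaveOn ℝ univ (u i)) :
    StrictConvexOn ℝ univ fun z : Fin I → ℝ × ℝ => ∑ i, regCost I a f u i (z i) := by
  simpa only [pi_univ] using
    strictConvexOn_pi_sum_apply fun i => strictConvexOn_regCost ha hI i (hf i) (hu i)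

theorem convex_centralFeasSet : Convex ℝ (centralFeasSet I plo phi dlo dhi) := by
  intro z hz z' hz' α β hα hβ hαβ
  refine ⟨?_, fun i => ?_⟩
  · simp only [Pi.add_apply, Pi.smul_apply, Prod.fst_add, Prod.snd_add, Prod.smul_fst,
      Prod.smul_snd, smul_eq_mul, Finset.sum_add_distrib, ← Finset.mul_sum, hz.1, hz'.1]
  · obtain ⟨hp, hp', hd, hd'⟩ := hz.2 i
    obtain ⟨hq, hq', he, he'⟩ := hz'.2 i
    have hpt := convex_Icc (plo i) (phi i) ⟨hp, hp'⟩ ⟨hq, hq'⟩ hα hβ hαβ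
    have hdt := convex_Icc (dlo i) (dhi i) ⟨hd, hd'⟩ ⟨he, he'⟩ hα hβ hαβ
    exact ⟨hpt.1, hpt.2, hdt.1, hdt.2⟩

theorem IsGNE.sum_regCost_le {phat dhat bhat : Fin I → ℝ}
    (h : IsGNE I a f u plo phi dlo dhi phat dhat bhat) (ha : a ≠ 0) (hI : 2 ≤ I)
    {p d : Fin I → ℝ} (hpd : centralFeas I plo phi dlo dhi p d) :
    ∑ i, regCost I a f u i (phat i, dhat i) ≤ ∑ i, regCost I a f u i (p i, d i) +
      ∑ i, ((d i - p i) - (dhat i - phat i)) ^ 2 / (2 * a * ((I : ℝ) - 1)) := by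
  have hC : (I : ℝ) - 1 ≠ 0 := by
    have : (2 : ℝ) ≤ I := by exact_mod_cast hI
    linarith
  set pr := price I a bhat
  have hi : ∀ i, regCost I a f u i (phat i, dhat i) ≤ regCost I a f u i (p i, d i) +
      ((d i - p i) - (dhat i - phat i)) ^ 2 / (2 * a * ((I : ℝ) - 1)) +
      pr * ((d i - p i) - (dhat i - phat i)) := by
    intro i
    have hdev := h.cost_le_of_deviation ha hI i ⟨(hpd.2 i).1, (hpd.2 i).2.1⟩ (hpd.2 i).2.2
    have hid : ((d i - p i) - (dhat i - phat i)) / (a * (I - 1)) * (d i - p i) =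
        (d i - p i) ^ 2 / (2 * a * ((I : ℝ) - 1)) -
          (dhat i - phat i) ^ 2 / (2 * a * ((I : ℝ) - 1)) +
          ((d i - p i) - (dhat i - phat i)) ^ 2 / (2 * a * ((I : ℝ) - 1)) := by
      field_simp
      ring
    rw [add_mul, hid] at hdev
    simp only [regCost]
    linarith
  have hbalance : ∑ i, pr * ((d i - p i) - (dhat i - phat i)) = 0 := by
    simp only [← Finset.mul_sum, Finset.sum_sub_distrib, hpd.1,
      (h.to_centralFeas ha (by omega)).1, sub_self, mul_zero]
  calc ∑ i, regCost I a f u i (phat i, dhat i)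
      ≤ ∑ i, (regCost I a f u i (p i, d i) +
          ((d i - p i) - (dhat i - phat i)) ^ 2 / (2 * a * ((I : ℝ) - 1)) +
          pr * ((d i - p i) - (dhat i - phat i))) := Finset.sum_le_sum fun i _ => hi i
    _ = _ := by rw [Finset.sum_add_distrib, Finset.sum_add_distrib, hbalance, add_zero]

theorem IsGNE.isMinOn_sum_regCost {phat dhat bhat : Fin I → ℝ}
    (h : IsGNE I a f u plo phi dlo dhi phat dhat bhat) (ha : 0 < a) (hI : 2 ≤ I)
    (hf : ∀ i, StrictConvexOn ℝ univ (f i)) (hu : ∀ i, StrictConcaveOn ℝ univ (u i)) :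
    IsMinOn (fun z : Fin I → ℝ × ℝ => ∑ i, regCost I a f u i (z i))
      (centralFeasSet I plo phi dlo dhi) (fun i => (phat i, dhat i)) := by
  refine isMinOn_iff.2 fun z hz => ?_
  refine (strictConvexOn_sum_regCost ha.le (by omega) hf hu).convexOn.le_of_forall_le_add_sq_mul
    trivial trivial (∑ i, ((z i).2 - (z i).1 - (dhat i - phat i)) ^ 2 / (2 * a * ((I : ℝ) - 1)))
    fun t ht => ?_
  have hzt := convex_centralFeasSet.add_smul_sub_mem
    (x := fun i => (phat i, dhat i)) (h.to_centralFeas ha.ne' (by omega)) hz ⟨ht.1.le, ht.2⟩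
  refine (h.sum_regCost_le ha.ne' hI hzt).trans_eq ?_
  simp only [Finset.mul_sum, Pi.add_apply, Pi.smul_apply, Pi.sub_apply, Prod.fst_add,
    Prod.snd_add, Prod.smul_fst, Prod.smul_snd, Prod.fst_sub, Prod.snd_sub, smul_eq_mul]
  congr 1
  refine Finset.sum_congr rfl fun i _ => ?_
  ring

end EnergySharing

theorem gne_is_unique_regularized_optimum_general
    (I : ℕ) (hI : 2 ≤ I) (a : ℝ) (ha : 0 < a)
    (f u : Fin I → ℝ → ℝ) (plo phi dlo dhi : Fin I → ℝ)
    (hfc : ∀ i, StrictConvexOn ℝ Set.univ (f i))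
    (huc : ∀ i, StrictConcaveOn ℝ Set.univ (u i))
    (phat dhat bhat : Fin I → ℝ)
    (hGNE : IsGNE I a f u plo phi dlo dhi phat dhat bhat) :
    centralFeas I plo phi dlo dhi phat dhat ∧
      (∀ p d : Fin I → ℝ, centralFeas I plo phi dlo dhi p d →
        regObj I a f u phat dhat ≤ regObj I a f u p d) ∧
      (∀ p d : Fin I → ℝ, centralFeas I plo phi dlo dhi p d →
        regObj I a f u p d = regObj I a f u phat dhat → p = phat ∧ d = dhat) := by
  have hfeas := hGNE.to_centralFeas ha.ne' (by omega)
  have hmin := hGNE.isMinOn_sum_regCost ha hI hfc huc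
  refine ⟨hfeas, fun p d hpd => ?_, fun p d hpd heq => ?_⟩
  · simpa only [regObj_eq_sum_regCost] using isMinOn_iff.1 hmin (fun i => (p i, d i)) hpd
  · rw [regObj_eq_sum_regCost, regObj_eq_sum_regCost] at heq
    have hmin' : IsMinOn (fun z : Fin I → ℝ × ℝ => ∑ i, regCost I a f u i (z i))
        (centralFeasSet I plo phi dlo dhi) (fun i => (p i, d i)) :=
      isMinOn_iff.2 fun z hz => heq ▸ isMinOn_iff.1 hmin z hz
    have heq' := ((strictConvexOn_sum_regCost ha.le (by omega) hfc huc).subset (subset_univ _)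
      convex_centralFeasSet).eq_of_isMinOn hmin' hmin hpd hfeas
    exact ⟨funext fun i => congrArg (fun z => (z i).1) heq',
      funext fun i => congrArg (fun z => (z i).2) heq'⟩

/-- At any GNE, `(p̂, d̂)` is the unique optimal solution of the regularized problem. -/
theorem gne_is_unique_regularized_optimum
    (I : ℕ) (hI : 2 ≤ I) (a : ℝ) (ha : 0 < a)
    (f u : Fin I → ℝ → ℝ) (plo phi dlo dhi : Fin I → ℝ)
    (hf : ∀ i, ContDiff ℝ 2 (f i)) (hfc : ∀ i, StrictConvexOn ℝ Set.univ (f i))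
    (hu : ∀ i, ContDiff ℝ 2 (u i)) (huc : ∀ i, StrictConcaveOn ℝ Set.univ (u i))
    (hpb : ∀ i, plo i ≤ phi i) (hdb : ∀ i, dlo i ≤ dhi i)
    (phat dhat bhat : Fin I → ℝ)
    (hGNE : IsGNE I a f u plo phi dlo dhi phat dhat bhat) :
    centralFeas I plo phi dlo dhi phat dhat ∧
      (∀ p d : Fin I → ℝ, centralFeas I plo phi dlo dhi p d →
        regObj I a f u phat dhat ≤ regObj I a f u p d) ∧
      (∀ p d : Fin I → ℝ, centralFeas I plo phi dlo dhi p d →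
        regObj I a f u p d = regObj I a f u phat dhat → p = phat ∧ d = dhat) :=
  gne_is_unique_regularized_optimum_general I hI a ha f u plo phi dlo dhi hfc huc phat dhat bhat
    hGNE
end

section
/- Let I ≥ 2 be an integer, a > 0, and let p, d, b ∈ ℝ^I satisfy b_i = d_i − p_i + (d_i − p_i + Σ_{j≠i} b_j)/(I−1) for every i ∈ {1,…,I}. Then Σ_{i=1}^I p_i = Σ_{i=1}^I d_i, and the quantities ζ_i := (d_i − p_i + Σ_{j≠i} b_j)/((I−1)·a) are equal for all i; moreover each ζ_i equals (Σ_{j=1}^I b_j)/(aI). -/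
/-!
Writing `s = Σ_j b_j`, the sum over `j ≠ i` is `s - b_i`, so the consistency condition is a
linear equation in `b_i` alone, with solution `b_i = d_i - p_i + s / I`. Summing over `i` gives
`s = Σ (d_i - p_i) + s`, i.e. supply meets demand, and substituting back turns every numerator
into `s - s / I = s (I - 1) / I`, independent of `i`.
-/

open Finset

variable {ι K : Type*} [Fintype ι] [Field K]

theorem eq_add_sum_div_card_of_eq_add_sum_erase_div [DecidableEq ι] [CharZero K]
    (hι : 2 ≤ Fintype.card ι) {e b : ι → K}
    (hb : ∀ i, b i = e i + (e i + ∑ j ∈ univ.erase i, b j) / ((Fintype.card ι : K) - 1))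
    (i : ι) : b i = e i + (∑ j, b j) / Fintype.card ι := by
  have hn : (Fintype.card ι : K) ≠ 0 := Nat.cast_ne_zero.2 (by omega)
  have hn1 : (Fintype.card ι : K) - 1 ≠ 0 := sub_ne_zero.2 (Nat.cast_ne_one.2 (by omega))
  have hi := hb i
  rw [sum_erase_eq_sub (mem_univ i)] at hi
  field_simp at hi ⊢
  linear_combination hi

theorem sum_eq_zero_of_forall_eq_add_sum_div_card [CharZero K] {e b : ι → K}
    (hb : ∀ i, b i = e i + (∑ j, b j) / Fintype.card ι) : ∑ i, e i = 0 := by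
  cases isEmpty_or_nonempty ι
  · exact Fintype.sum_empty e
  have hn : (Fintype.card ι : K) ≠ 0 := Nat.cast_ne_zero.2 Fintype.card_ne_zero
  have hsum : ∑ i, b i = ∑ i, e i + ∑ i, b i := by
    conv_lhs => rw [Fintype.sum_congr _ _ hb]
    rw [sum_add_distrib, sum_const, card_univ, nsmul_eq_mul, mul_div_cancel₀ _ hn]
  linear_combination -hsum

theorem add_sum_erase_div_eq_sum_div_mul_card [DecidableEq ι] [CharZero K]
    (hι : 2 ≤ Fintype.card ι) {e b : ι → K} (a : K)
    (hb : ∀ i, b i = e i + (∑ j, b j) / Fintype.card ι) (i : ι) :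
    (e i + ∑ j ∈ univ.erase i, b j) / (((Fintype.card ι : K) - 1) * a) =
      (∑ j, b j) / (a * Fintype.card ι) := by
  have hn : (Fintype.card ι : K) ≠ 0 := Nat.cast_ne_zero.2 (by omega)
  have hn1 : (Fintype.card ι : K) - 1 ≠ 0 := sub_ne_zero.2 (Nat.cast_ne_one.2 (by omega))
  rw [sum_erase_eq_sub (mem_univ i), hb i]
  field_simp
  ring

theorem equilibrium_bid_consistency_general
    (I : ℕ) (hI : 2 ≤ I) (a : ℝ)
    (p d b : Fin I → ℝ)
    (hb : ∀ i : Fin I,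
      b i = d i - p i + (d i - p i + ∑ j ∈ Finset.univ.erase i, b j) / ((I : ℝ) - 1)) :
    (∑ i, p i = ∑ i, d i) ∧
      (∀ i j : Fin I,
        (d i - p i + ∑ k ∈ Finset.univ.erase i, b k) / (((I : ℝ) - 1) * a) =
          (d j - p j + ∑ k ∈ Finset.univ.erase j, b k) / (((I : ℝ) - 1) * a)) ∧
      (∀ i : Fin I,
        (d i - p i + ∑ k ∈ Finset.univ.erase i, b k) / (((I : ℝ) - 1) * a) =
          (∑ j, b j) / (a * I)) := by
  have hcard : 2 ≤ Fintype.card (Fin I) := by rwa [Fintype.card_fin]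
  have hsolved : ∀ i, b i = d i - p i + (∑ j, b j) / Fintype.card (Fin I) :=
    eq_add_sum_div_card_of_eq_add_sum_erase_div (e := fun i => d i - p i) hcard
      (by simpa only [Fintype.card_fin] using hb)
  have hprice : ∀ i, (d i - p i + ∑ k ∈ univ.erase i, b k) / (((I : ℝ) - 1) * a) =
      (∑ j, b j) / (a * I) := by
    simpa only [Fintype.card_fin] using
      add_sum_erase_div_eq_sum_div_mul_card (e := fun i => d i - p i) hcard a hsolved
  have hbalance : ∑ i, (d i - p i) = 0 :=
    sum_eq_zero_of_forall_eq_add_sum_div_card hsolved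
  rw [sum_sub_distrib, sub_eq_zero] at hbalance
  exact ⟨hbalance.symm, fun i j => (hprice i).trans (hprice j).symm, hprice⟩

/-- Consistency of equilibrium bids: if every prosumer's bid satisfies
`b_i = d_i − p_i + (d_i − p_i + Σ_{j≠i} b_j)/(I−1)`, then total production equals total
demand, and the quantities `ζ_i = (d_i − p_i + Σ_{j≠i} b_j)/((I−1)a)` are all equal to the
sharing price `(Σ_j b_j)/(aI)`. -/
theorem equilibrium_bid_consistency
    (I : ℕ) (hI : 2 ≤ I) (a : ℝ) (ha : 0 < a)
    (p d b : Fin I → ℝ)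
    (hb : ∀ i : Fin I,
      b i = d i - p i + (d i - p i + ∑ j ∈ Finset.univ.erase i, b j) / ((I : ℝ) - 1)) :
    (∑ i, p i = ∑ i, d i) ∧
      (∀ i j : Fin I,
        (d i - p i + ∑ k ∈ Finset.univ.erase i, b k) / (((I : ℝ) - 1) * a) =
          (d j - p j + ∑ k ∈ Finset.univ.erase j, b k) / (((I : ℝ) - 1) * a)) ∧
      (∀ i : Fin I,
        (d i - p i + ∑ k ∈ Finset.univ.erase i, b k) / (((I : ℝ) - 1) * a) =
          (∑ j, b j) / (a * I)) :=
  equilibrium_bid_consistency_general I hI a p d b hb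
end

section
/- Let I ≥ 2, a > 0, and let S ⊆ ℝ^I × ℝ^I be the set of pairs (p, d) with Σ_{i=1}^I p_i = Σ_{i=1}^I d_i and p̲_i ≤ p_i ≤ p̄_i, d̲_i ≤ d_i ≤ d̄_i for all i, assumed nonempty. Define J(p, d) = Σ_{i=1}^I [f_i(p_i) − u_i(d_i)] and Ω(p, d) = Σ_{i=1}^I (d_i − p_i)². Let (p̃, d̃) minimize J over S and let (p̂, d̂) minimize J + Ω/(2a(I−1)) over S. If C₁ ≥ max(|p̲_i − d̄_i|², |p̄_i − d̲_i|²) for all i, then J(p̂, d̂) ≤ J(p̃, d̃) + C₁·I/(a(I−1)). -/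
/-! The equilibrium minimizes `J + Ω / (2a(I-1))`, so comparing it with the social optimum gives
`J(p̂, d̂) ≤ J(p̃, d̃) + Ω(p̃, d̃) / (2a(I-1))`. On the box constraints each mismatch `d_i - p_i`
lies in `[d̲_i - p̄_i, d̄_i - p̲_i]`, so `Ω(p̃, d̃) ≤ C₁ I`; this leaves a factor `2` to spare. -/

open Finset

/-- Total net cost. -/
noncomputable def totalCost (I : ℕ) (f u : Fin I → ℝ → ℝ) (p d : Fin I → ℝ) : ℝ :=
  ∑ i, (f i (p i) - u i (d i))

/-- Regularization term. -/
noncomputable def omegaReg (I : ℕ) (p d : Fin I → ℝ) : ℝ :=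
  ∑ i, (d i - p i) ^ 2

lemma sq_sub_le_of_mem_box {p d plo phi dlo dhi C : ℝ}
    (hp : plo ≤ p ∧ p ≤ phi) (hd : dlo ≤ d ∧ d ≤ dhi)
    (hlo : |plo - dhi| ^ 2 ≤ C) (hhi : |phi - dlo| ^ 2 ≤ C) :
    (d - p) ^ 2 ≤ C := by
  rw [sq_abs] at hlo hhi
  rcases le_total (d - p) 0 with _ | _ <;> nlinarith

lemma omegaReg_nonneg (I : ℕ) (p d : Fin I → ℝ) : 0 ≤ omegaReg I p d :=
  sum_nonneg fun _ _ => sq_nonneg _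

lemma omegaReg_le_of_centralFeas {I : ℕ} {plo phi dlo dhi p d : Fin I → ℝ} {C : ℝ}
    (hC : ∀ i, |plo i - dhi i| ^ 2 ≤ C ∧ |phi i - dlo i| ^ 2 ≤ C)
    (hfeas : centralFeas I plo phi dlo dhi p d) :
    omegaReg I p d ≤ C * I := by
  calc omegaReg I p d ≤ ∑ _i : Fin I, C := sum_le_sum fun i _ => by
        obtain ⟨hplo, hphi, hdlo, hdhi⟩ := hfeas.2 i
        exact sq_sub_le_of_mem_box ⟨hplo, hphi⟩ ⟨hdlo, hdhi⟩ (hC i).1 (hC i).2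
    _ = C * I := by simp [mul_comm]

theorem sharing_cost_gap_general
    (I : ℕ) (hI : 2 ≤ I) (a : ℝ) (ha : 0 < a)
    (f u : Fin I → ℝ → ℝ) (plo phi dlo dhi : Fin I → ℝ)
    (C1 : ℝ)
    (hC1 : ∀ i, |plo i - dhi i| ^ 2 ≤ C1 ∧ |phi i - dlo i| ^ 2 ≤ C1)
    (ptil dtil phat dhat : Fin I → ℝ)
    (htilFeas : centralFeas I plo phi dlo dhi ptil dtil)
    (hhatOpt : ∀ p d : Fin I → ℝ, centralFeas I plo phi dlo dhi p d →
      totalCost I f u phat dhat + omegaReg I phat dhat / (2 * a * ((I : ℝ) - 1)) ≤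
        totalCost I f u p d + omegaReg I p d / (2 * a * ((I : ℝ) - 1))) :
    totalCost I f u phat dhat ≤
      totalCost I f u ptil dtil + C1 * I / (a * ((I : ℝ) - 1)) := by
  have hI1 : 0 < (I : ℝ) - 1 := by
    have : (2 : ℝ) ≤ I := by exact_mod_cast hI
    linarith
  have hden : 0 < a * ((I : ℝ) - 1) := mul_pos ha hI1
  have hOmtil := omegaReg_le_of_centralFeas hC1 htilFeas
  have hC1I : 0 ≤ C1 * I := (omegaReg_nonneg I ptil dtil).trans hOmtil
  calc totalCost I f u phat dhat
      ≤ totalCost I f u phat dhat + omegaReg I phat dhat / (2 * a * ((I : ℝ) - 1)) :=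
        le_add_of_nonneg_right (div_nonneg (omegaReg_nonneg I phat dhat) (by linarith))
    _ ≤ totalCost I f u ptil dtil + omegaReg I ptil dtil / (2 * a * ((I : ℝ) - 1)) :=
        hhatOpt ptil dtil htilFeas
    _ ≤ totalCost I f u ptil dtil + C1 * I / (2 * a * ((I : ℝ) - 1)) := by
        gcongr
    _ ≤ totalCost I f u ptil dtil + C1 * I / (a * ((I : ℝ) - 1)) := by
        gcongr
        linarith

/-- The gap between the net cost at the energy sharing equilibrium and the
centralized social optimum is at most `C₁ I / (a (I − 1))`. -/
theorem sharing_cost_gap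
    (I : ℕ) (hI : 2 ≤ I) (a : ℝ) (ha : 0 < a)
    (f u : Fin I → ℝ → ℝ) (plo phi dlo dhi : Fin I → ℝ)
    (hfcont : ∀ i, Continuous (f i)) (hucont : ∀ i, Continuous (u i))
    (C1 : ℝ)
    (hC1 : ∀ i, |plo i - dhi i| ^ 2 ≤ C1 ∧ |phi i - dlo i| ^ 2 ≤ C1)
    (ptil dtil phat dhat : Fin I → ℝ)
    (htilFeas : centralFeas I plo phi dlo dhi ptil dtil)
    (htilOpt : ∀ p d : Fin I → ℝ, centralFeas I plo phi dlo dhi p d →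
      totalCost I f u ptil dtil ≤ totalCost I f u p d)
    (hhatFeas : centralFeas I plo phi dlo dhi phat dhat)
    (hhatOpt : ∀ p d : Fin I → ℝ, centralFeas I plo phi dlo dhi p d →
      totalCost I f u phat dhat + omegaReg I phat dhat / (2 * a * ((I : ℝ) - 1)) ≤
        totalCost I f u p d + omegaReg I p d / (2 * a * ((I : ℝ) - 1))) :
    totalCost I f u phat dhat ≤
      totalCost I f u ptil dtil + C1 * I / (a * ((I : ℝ) - 1)) :=
  sharing_cost_gap_general I hI a ha f u plo phi dlo dhi C1 hC1 ptil dtil phat dhat htilFeas hhatOpt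
end

section
/- Let I ≥ 2, a > 0, and let S ⊆ ℝ^I × ℝ^I be the set of pairs (p, d) with Σ_{i=1}^I p_i = Σ_{i=1}^I d_i and p̲_i ≤ p_i ≤ p̄_i, d̲_i ≤ d_i ≤ d̄_i for all i, assumed nonempty. Define J(p, d) = Σ_{i=1}^I [f_i(p_i) − u_i(d_i)] and Ω(p, d) = Σ_{i=1}^I (d_i − p_i)². Let (p̃, d̃) minimize J over S and let (p̂, d̂) minimize J + Ω/(2a(I−1)) over S. Suppose C₁ ≥ max(|p̲_i − d̄_i|², |p̄_i − d̲_i|²) for all i, and suppose there exists C₂ < 0 with J(p̃, d̃) ≤ C₂·I. Then J(p̂, d̂)/J(p̃, d̃) ≥ 1 − C/(I−1), where C = C₁/(a·|C₂|). -/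
/-!
Comparing the equilibrium with the social optimum inside the regularized objective gives
`J(p̂,d̂) ≤ J(p̃,d̃) + Ω(p̃,d̃) / (2a(I−1))`, since `Ω ≥ 0`. Each term of `Ω` on the feasible set
is at most `C₁`, so the gap is at most `C₁ I / (2a(I−1))`; dividing by `J(p̃,d̃) ≤ C₂ I < 0`
turns it into a relative loss of at most `C₁ / (2a|C₂|(I−1))`.
-/

open Finset

lemma sq_le_of_le_of_le {lo x hi C : ℝ} (hlo : lo ≤ x) (hhi : x ≤ hi)
    (hloC : |lo| ^ 2 ≤ C) (hhiC : |hi| ^ 2 ≤ C) : x ^ 2 ≤ C :=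
  calc x ^ 2 = |x| ^ 2 := (sq_abs x).symm
    _ ≤ max |lo| |hi| ^ 2 := by gcongr; exact abs_le_max_abs_abs hlo hhi
    _ ≤ C := by rcases max_choice |lo| |hi| with h | h <;> rwa [h]

lemma totalCost_le_add_omegaReg_div {I : ℕ} {f u : Fin I → ℝ → ℝ} {p d p' d' : Fin I → ℝ}
    {D : ℝ} (hD : 0 ≤ D)
    (hopt : totalCost I f u p d + omegaReg I p d / D ≤ totalCost I f u p' d' + omegaReg I p' d' / D) :
    totalCost I f u p d ≤ totalCost I f u p' d' + omegaReg I p' d' / D := by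
  have := div_nonneg (omegaReg_nonneg I p d) hD
  linarith

lemma one_sub_div_le_div_of_le_add {x y δ : ℝ} (hy : y < 0) (h : x ≤ y + δ) :
    1 - δ / -y ≤ x / y := by
  rw [div_neg, sub_neg_eq_add, le_div_iff_of_neg hy, add_mul, div_mul_cancel₀ _ hy.ne]
  linarith

lemma relative_gap_le {a n C1 C2 J : ℝ} (ha : 0 < a) (hn : 1 < n) (hC1 : 0 ≤ C1)
    (hC2 : C2 < 0) (hJ : J ≤ C2 * n) :
    C1 * n / (2 * a * (n - 1)) / -J ≤ C1 / (a * |C2|) / (n - 1) := by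
  have hC2n : 0 < -C2 * n := by nlinarith
  rw [abs_of_neg hC2]
  calc C1 * n / (2 * a * (n - 1)) / -J
      ≤ C1 * n / (2 * a * (n - 1)) / (-C2 * n) := by
        have : 0 < n - 1 := by linarith
        gcongr
        linarith
    _ = C1 / (a * -C2) / (n - 1) / 2 := by
        field_simp
    _ ≤ C1 / (a * -C2) / (n - 1) := half_le_self <|
        div_nonneg (div_nonneg hC1 (mul_pos ha (neg_pos.2 hC2)).le) (by linarith)

theorem price_of_anarchy_bound_general
    (I : ℕ) (hI : 2 ≤ I) (a : ℝ) (ha : 0 < a)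
    (f u : Fin I → ℝ → ℝ) (plo phi dlo dhi : Fin I → ℝ)
    (C1 C2 : ℝ)
    (hC1 : ∀ i, |plo i - dhi i| ^ 2 ≤ C1 ∧ |phi i - dlo i| ^ 2 ≤ C1)
    (hC2 : C2 < 0)
    (ptil dtil phat dhat : Fin I → ℝ)
    (htilFeas : centralFeas I plo phi dlo dhi ptil dtil)
    (hhatOpt : ∀ p d : Fin I → ℝ, centralFeas I plo phi dlo dhi p d →
      totalCost I f u phat dhat + omegaReg I phat dhat / (2 * a * ((I : ℝ) - 1)) ≤
        totalCost I f u p d + omegaReg I p d / (2 * a * ((I : ℝ) - 1)))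
    (hneg : totalCost I f u ptil dtil ≤ C2 * I) :
    1 - (C1 / (a * |C2|)) / ((I : ℝ) - 1) ≤
      totalCost I f u phat dhat / totalCost I f u ptil dtil := by
  have hI1 : (1 : ℝ) < I := by exact_mod_cast hI
  have hC1nn : 0 ≤ C1 := (sq_nonneg _).trans (hC1 ⟨0, by omega⟩).1
  have hJtil : totalCost I f u ptil dtil < 0 :=
    hneg.trans_lt (mul_neg_of_neg_of_pos hC2 (by linarith))
  have hgap : totalCost I f u phat dhat ≤
      totalCost I f u ptil dtil + C1 * I / (2 * a * ((I : ℝ) - 1)) :=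
    (totalCost_le_add_omegaReg_div (by nlinarith) (hhatOpt _ _ htilFeas)).trans
      (by gcongr; exact omegaReg_le_of_centralFeas hC1 htilFeas)
  calc 1 - (C1 / (a * |C2|)) / ((I : ℝ) - 1)
      ≤ 1 - C1 * I / (2 * a * ((I : ℝ) - 1)) / -totalCost I f u ptil dtil := by
        linarith [relative_gap_le ha hI1 hC1nn hC2 hneg]
    _ ≤ _ := one_sub_div_le_div_of_le_add hJtil hgap

/-- Price-of-anarchy bound: `J(p̂,d̂)/J(p̃,d̃) ≥ 1 − C/(I−1)` with `C = C₁/(a·|C₂|)`. -/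
theorem price_of_anarchy_bound
    (I : ℕ) (hI : 2 ≤ I) (a : ℝ) (ha : 0 < a)
    (f u : Fin I → ℝ → ℝ) (plo phi dlo dhi : Fin I → ℝ)
    (hfcont : ∀ i, Continuous (f i)) (hucont : ∀ i, Continuous (u i))
    (C1 C2 : ℝ)
    (hC1 : ∀ i, |plo i - dhi i| ^ 2 ≤ C1 ∧ |phi i - dlo i| ^ 2 ≤ C1)
    (hC2 : C2 < 0)
    (ptil dtil phat dhat : Fin I → ℝ)
    (htilFeas : centralFeas I plo phi dlo dhi ptil dtil)
    (htilOpt : ∀ p d : Fin I → ℝ, centralFeas I plo phi dlo dhi p d →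
      totalCost I f u ptil dtil ≤ totalCost I f u p d)
    (hhatFeas : centralFeas I plo phi dlo dhi phat dhat)
    (hhatOpt : ∀ p d : Fin I → ℝ, centralFeas I plo phi dlo dhi p d →
      totalCost I f u phat dhat + omegaReg I phat dhat / (2 * a * ((I : ℝ) - 1)) ≤
        totalCost I f u p d + omegaReg I p d / (2 * a * ((I : ℝ) - 1)))
    (hneg : totalCost I f u ptil dtil ≤ C2 * I) :
    1 - (C1 / (a * |C2|)) / ((I : ℝ) - 1) ≤
      totalCost I f u phat dhat / totalCost I f u ptil dtil :=
  price_of_anarchy_bound_general I hI a ha f u plo phi dlo dhi C1 C2 hC1 hC2 ptil dtil phat dhat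
    htilFeas hhatOpt hneg
end

section
/- Let I ≥ 2, a > 0, m > 0, and for each i ∈ {1,…,I} let f_i, u_i : ℝ → ℝ be twice differentiable with f_i'' ≥ m and −u_i'' ≥ m everywhere, with capacity bounds satisfying p̲ ≤ p̲_i ≤ p̄_i ≤ p̄ and d̲ ≤ d̲_i ≤ d̄_i ≤ d̄. Suppose λ̃ ∈ ℝ is a balancing price for the centralized problem: Σ_{i=1}^I [f̃_i(λ̃) − ũ_i(λ̃)] = 0, where f̃_i(λ) is the unique minimizer of p ↦ f_i(p) − λp on [p̲_i, p̄_i] and ũ_i(λ) is the unique minimizer of d ↦ λd − u_i(d) on [d̲_i, d̄_i]. Then there exists ζ̂ with λ̃ + (p̲ − d̄)/(a(I−1)) ≤ ζ̂ ≤ λ̃ + (p̄ − d̲)/(a(I−1)) such that the unique minimizer (p̂_i, d̂_i)_{i=1}^I of Σ_i [f_i(p_i) − u_i(d_i) + (d_i − p_i)²/(2a(I−1)) + ζ̂·(d_i − p_i)] over the product of boxes [p̲_i, p̄_i] × [d̲_i, d̄_i] satisfies Σ_{i=1}^I p̂_i = Σ_{i=1}^I d̂_i. -/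
/-!
For a fixed price `ζ` the regularized problem splits into one problem per agent, with cost
`f(p) - u(d) + (d - p)² / (2c) + ζ (d - p)` on the box of agent `i`, where `c = a (I - 1)`.
This cost is `m`-strongly convex in `(p, d)`, so it has a unique minimizer, and that minimizer
is Lipschitz in `ζ`; hence the total net supply `S(ζ) = Σᵢ (pᵢ - dᵢ)` is continuous.
Up to a constant, the agent's cost is its centralized cost at price `λ̃` plus
`((p - d) - c (ζ - λ̃))² / (2c)`, so its minimizer has net supply at least as close to
`c (ζ - λ̃)` as the centralized one. At `ζ = λ̃ + (p̄ - d̲) / c` every feasible net supply lies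
below `c (ζ - λ̃)`, which forces each agent's net supply up, and at `ζ = λ̃ + (p̲ - d̄) / c` down.
The centralized net supplies sum to zero, so `S` changes sign on this interval and the
intermediate value theorem yields `ζ̂`. A joint minimizer is minimal agentwise, hence it is
the family of these unique minimizers.
-/

open Finset

theorem strongConvexOn_of_le_iteratedDeriv_two {s : Set ℝ} {f : ℝ → ℝ} {m : ℝ}
    (hs : Convex ℝ s) (hf : ContDiff ℝ 2 f) (hf'' : ∀ x, m ≤ iteratedDeriv 2 f x) :
    StrongConvexOn s m f := by
  have hq : ContDiff ℝ 2 fun x : ℝ => m / 2 * x ^ 2 := by fun_prop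
  have hg : ContDiff ℝ 2 fun x => f x - m / 2 * x ^ 2 := hf.sub hq
  rw [strongConvexOn_iff_convex]
  simp only [Real.norm_eq_abs, sq_abs]
  refine (convexOn_univ_of_deriv2_nonneg (hg.differentiable (by norm_num))
    hg.differentiable_deriv_two fun x => ?_).subset (Set.subset_univ s) hs
  rw [← iteratedDeriv_eq_iterate, iteratedDeriv_fun_sub hf.contDiffAt hq.contDiffAt]
  have hq'' : iteratedDeriv 2 (fun x : ℝ => m / 2 * x ^ 2) x = m := by simp
  linarith [hf'' x]

theorem strongConcaveOn_of_iteratedDeriv_two_le {s : Set ℝ} {u : ℝ → ℝ} {m : ℝ}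
    (hs : Convex ℝ s) (hu : ContDiff ℝ 2 u) (hu'' : ∀ x, iteratedDeriv 2 u x ≤ -m) :
    StrongConcaveOn s m u := by
  have h : StrongConvexOn s m fun x => -u x :=
    strongConvexOn_of_le_iteratedDeriv_two hs hu.neg fun x => by
      rw [iteratedDeriv_fun_neg]
      linarith [hu'' x]
  have hneg := h.neg
  simp only [Pi.neg_def, neg_neg] at hneg
  exact hneg

section StrongConvexMinimizer

variable {E : Type*} [NormedAddCommGroup E] [NormedSpace ℝ E] {s : Set E} {m : ℝ}

theorem StrongConvexOn.add_sq_norm_le_of_isMinOn {f : E → ℝ} {x y : E}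
    (hf : StrongConvexOn s m f) (hx : IsMinOn f s x) (hxs : x ∈ s) (hys : y ∈ s) :
    f x + m / 2 * ‖y - x‖ ^ 2 ≤ f y := by
  have key : Set.Ioo 0 1 ⊆ {t : ℝ | f x + (1 - t) * (m / 2 * ‖y - x‖ ^ 2) ≤ f y} := by
    rintro t ⟨ht0, ht1⟩
    have hconv := hf.2 hxs hys (sub_nonneg.2 ht1.le) ht0.le (by ring)
    have hmin := isMinOn_iff.1 hx _ (hf.1 hxs hys (sub_nonneg.2 ht1.le) ht0.le (by ring))
    rw [norm_sub_rev, smul_eq_mul, smul_eq_mul] at hconv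
    refine le_of_mul_le_mul_left ?_ ht0
    linear_combination hmin + hconv
  have hclosed : IsClosed {t : ℝ | f x + (1 - t) * (m / 2 * ‖y - x‖ ^ 2) ≤ f y} :=
    isClosed_le (by fun_prop) continuous_const
  have h0 : (0 : ℝ) ∈ closure (Set.Ioo 0 1) := by
    rw [closure_Ioo zero_ne_one]
    exact Set.left_mem_Icc.2 zero_le_one
  simpa using hclosed.closure_subset_iff.2 key h0

theorem lipschitzWith_of_forall_isMinOn_add_mul {φ : ℝ → E → ℝ} {g e : E → ℝ} {L : NNReal}
    {x : ℝ → E} (hm : 0 < m) (he : LipschitzWith L e) (hφ : ∀ ζ z, φ ζ z = g z + ζ * e z)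
    (hconv : ∀ ζ, StrongConvexOn s m (φ ζ)) (hxs : ∀ ζ, x ζ ∈ s)
    (hx : ∀ ζ, IsMinOn (φ ζ) s (x ζ)) :
    LipschitzWith (Real.toNNReal (L / m)) x := by
  refine LipschitzWith.of_dist_le' fun ζ₁ ζ₂ => ?_
  have h₁ := (hconv ζ₁).add_sq_norm_le_of_isMinOn (hx ζ₁) (hxs ζ₁) (hxs ζ₂)
  have h₂ := (hconv ζ₂).add_sq_norm_le_of_isMinOn (hx ζ₂) (hxs ζ₂) (hxs ζ₁)
  simp only [hφ] at h₁ h₂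
  have hlip : (ζ₁ - ζ₂) * (e (x ζ₂) - e (x ζ₁)) ≤ dist ζ₁ ζ₂ * (L * dist (x ζ₁) (x ζ₂)) :=
    calc (ζ₁ - ζ₂) * (e (x ζ₂) - e (x ζ₁))
        ≤ dist ζ₁ ζ₂ * dist (e (x ζ₂)) (e (x ζ₁)) := by
          rw [Real.dist_eq, Real.dist_eq, ← abs_mul]; exact le_abs_self _
      _ ≤ dist ζ₁ ζ₂ * (L * dist (x ζ₁) (x ζ₂)) := by
          rw [dist_comm (x ζ₁)]; exact mul_le_mul_of_nonneg_left (he.dist_le_mul _ _) dist_nonneg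
  have hsq : m * dist (x ζ₁) (x ζ₂) * dist (x ζ₁) (x ζ₂)
      ≤ L * dist ζ₁ ζ₂ * dist (x ζ₁) (x ζ₂) := by
    rw [dist_eq_norm (x ζ₁)] at hlip ⊢
    rw [norm_sub_rev] at h₁
    linear_combination h₁ + h₂ + hlip
  rw [div_mul_eq_mul_div, le_div_iff₀ hm]
  rcases (dist_nonneg (x := x ζ₁) (y := x ζ₂)).eq_or_lt with h | h
  · rw [← h, zero_mul]; positivity
  · exact le_of_mul_le_mul_right (by linarith [hsq]) h

end StrongConvexMinimizer

theorem eq_of_sum_le_sum_of_isMinOn {ι E : Type*} [Fintype ι] [AddCommGroup E] [Module ℝ E]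
    {φ : ι → E → ℝ} {s : ι → Set E} {x y : ι → E} (hφ : ∀ i, StrictConvexOn ℝ (s i) (φ i))
    (hy : ∀ i, IsMinOn (φ i) (s i) (y i)) (hxs : ∀ i, x i ∈ s i) (hys : ∀ i, y i ∈ s i)
    (hsum : ∑ i, φ i (x i) ≤ ∑ i, φ i (y i)) : x = y := by
  have hle : ∀ i ∈ univ, φ i (y i) ≤ φ i (x i) := fun i _ => hy i (hxs i)
  have heq := (sum_eq_sum_iff_of_le hle).1 (le_antisymm (sum_le_sum hle) hsum)
  funext i
  refine (hφ i).eq_of_isMinOn (isMinOn_iff.2 fun z hz => ?_) (hy i) (hxs i) (hys i)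
  exact heq i (mem_univ i) ▸ hy i hz

/-- The cost of an agent producing `x.1` and consuming `x.2`; in the theorem `c = a (I - 1)`. -/
noncomputable def sharingCost (f u : ℝ → ℝ) (c ζ : ℝ) (x : ℝ × ℝ) : ℝ :=
  f x.1 - u x.2 + (x.2 - x.1) ^ 2 / (2 * c) + ζ * (x.2 - x.1)

section SharingCost

variable {f u : ℝ → ℝ} {c m : ℝ} {s t : Set ℝ}

theorem continuous_sharingCost {ζ : ℝ} (hf : Continuous f) (hu : Continuous u) :
    Continuous (sharingCost f u c ζ) := by
  unfold sharingCost
  fun_prop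

theorem sharingCost_eq_add_mul (ζ : ℝ) (x : ℝ × ℝ) :
    sharingCost f u c ζ x = sharingCost f u c 0 x + ζ * (x.2 - x.1) := by
  simp only [sharingCost]
  ring

theorem strongConvexOn_sharingCost {ζ : ℝ} (hc : 0 ≤ c) (hm : 0 ≤ m)
    (hf : StrongConvexOn s m f) (hu : StrongConcaveOn t m u) :
    StrongConvexOn (s ×ˢ t) m (sharingCost f u c ζ) := by
  refine ⟨hf.1.prod hu.1, fun x hx y hy a b ha hb hab => ?_⟩
  have hnorm : ‖x - y‖ ^ 2 ≤ (x.1 - y.1) ^ 2 + (x.2 - y.2) ^ 2 := by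
    rw [Prod.norm_def, Prod.fst_sub, Prod.snd_sub, Real.norm_eq_abs, Real.norm_eq_abs]
    rcases max_choice |x.1 - y.1| |x.2 - y.2| with h | h <;> rw [h, sq_abs] <;>
      nlinarith [sq_nonneg (x.1 - y.1), sq_nonneg (x.2 - y.2)]
  have hquad : (a * (x.2 - x.1) + b * (y.2 - y.1)) ^ 2 / (2 * c)
      ≤ a * ((x.2 - x.1) ^ 2 / (2 * c)) + b * ((y.2 - y.1) ^ 2 / (2 * c)) := by
    rw [mul_div_assoc', mul_div_assoc', ← add_div]
    gcongr
    nlinarith [mul_nonneg ha hb, sq_nonneg (x.2 - x.1 - (y.2 - y.1))]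
  have hf' := hf.2 hx.1 hy.1 ha hb hab
  have hu' := hu.2 hx.2 hy.2 ha hb hab
  simp only [sharingCost, Prod.fst_add, Prod.snd_add, Prod.smul_fst, Prod.smul_snd,
    smul_eq_mul] at hf' hu' ⊢
  rw [Real.norm_eq_abs, sq_abs] at hf' hu'
  have hlin : a * (x.2 - x.1) + b * (y.2 - y.1) = a * x.2 + b * y.2 - (a * x.1 + b * y.1) := by
    ring
  have hmod := mul_le_mul_of_nonneg_left hnorm (by positivity : 0 ≤ a * b * (m / 2))
  rw [← hlin]
  linear_combination hf' + hu' + hquad + hmod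

theorem exists_continuous_isMinOn_sharingCost (hc : 0 ≤ c) (hm : 0 < m)
    (hfc : Continuous f) (huc : Continuous u) (hf : StrongConvexOn s m f)
    (hu : StrongConcaveOn t m u) (hs : IsCompact s) (ht : IsCompact t) (hs' : s.Nonempty)
    (ht' : t.Nonempty) :
    ∃ x : ℝ → ℝ × ℝ, Continuous x ∧
      ∀ ζ, x ζ ∈ s ×ˢ t ∧ IsMinOn (sharingCost f u c ζ) (s ×ˢ t) (x ζ) := by
  choose x hxs hx using fun ζ => (hs.prod ht).exists_isMinOn (hs'.prod ht')
    (continuous_sharingCost (c := c) (ζ := ζ) hfc huc).continuousOn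
  refine ⟨x, ?_, fun ζ => ⟨hxs ζ, hx ζ⟩⟩
  exact (lipschitzWith_of_forall_isMinOn_add_mul hm
    (LipschitzWith.prod_snd.sub LipschitzWith.prod_fst) sharingCost_eq_add_mul
    (fun _ => strongConvexOn_sharingCost hc hm.le hf hu) hxs hx).continuous

variable {lam p d : ℝ} {x : ℝ × ℝ}

theorem sq_sub_sub_le_of_isMinOn_sharingCost {ζ : ℝ} (hc : 0 < c)
    (hp : ∀ y ∈ s, f p - lam * p ≤ f y - lam * y) (hd : ∀ y ∈ t, lam * d - u d ≤ lam * y - u y)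
    (hps : p ∈ s) (hdt : d ∈ t) (hxs : x ∈ s ×ˢ t)
    (hx : IsMinOn (sharingCost f u c ζ) (s ×ˢ t) x) :
    (x.1 - x.2 - c * (ζ - lam)) ^ 2 ≤ (p - d - c * (ζ - lam)) ^ 2 := by
  have hcost := isMinOn_iff.1 hx (p, d) ⟨hps, hdt⟩
  have hp' := hp x.1 hxs.1
  have hd' := hd x.2 hxs.2
  simp only [sharingCost] at hcost
  have hcomplete : ∀ q r, (q - r - c * (ζ - lam)) ^ 2
      = 2 * c * ((r - q) ^ 2 / (2 * c) + (ζ - lam) * (r - q)) + (c * (ζ - lam)) ^ 2 :=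
    fun q r => by
      field_simp
      ring
  rw [hcomplete, hcomplete]
  gcongr 2 * c * ?_ + _
  linarith

theorem sub_le_of_isMinOn_sharingCost {P D : ℝ} (hc : 0 < c)
    (hp : ∀ y ∈ s, f p - lam * p ≤ f y - lam * y) (hd : ∀ y ∈ t, lam * d - u d ≤ lam * y - u y)
    (hps : p ∈ s) (hdt : d ∈ t) (hxs : x ∈ s ×ˢ t) (hsP : ∀ y ∈ s, y ≤ P) (htD : ∀ y ∈ t, D ≤ y)
    (hx : IsMinOn (sharingCost f u c (lam + (P - D) / c)) (s ×ˢ t) x) : p - d ≤ x.1 - x.2 := by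
  have hsq := sq_sub_sub_le_of_isMinOn_sharingCost hc hp hd hps hdt hxs hx
  rw [add_sub_cancel_left, mul_div_cancel₀ _ hc.ne', ← neg_sq, ← neg_sq (p - d - _)] at hsq
  have := (sq_le_sq₀ (by linarith [hsP x.1 hxs.1, htD x.2 hxs.2])
    (by linarith [hsP p hps, htD d hdt])).1 hsq
  linarith

theorem le_sub_of_isMinOn_sharingCost {P D : ℝ} (hc : 0 < c)
    (hp : ∀ y ∈ s, f p - lam * p ≤ f y - lam * y) (hd : ∀ y ∈ t, lam * d - u d ≤ lam * y - u y)
    (hps : p ∈ s) (hdt : d ∈ t) (hxs : x ∈ s ×ˢ t) (hsP : ∀ y ∈ s, P ≤ y) (htD : ∀ y ∈ t, y ≤ D)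
    (hx : IsMinOn (sharingCost f u c (lam + (P - D) / c)) (s ×ˢ t) x) : x.1 - x.2 ≤ p - d := by
  have hsq := sq_sub_sub_le_of_isMinOn_sharingCost hc hp hd hps hdt hxs hx
  rw [add_sub_cancel_left, mul_div_cancel₀ _ hc.ne'] at hsq
  have := (sq_le_sq₀ (by linarith [hsP x.1 hxs.1, htD x.2 hxs.2])
    (by linarith [hsP p hps, htD d hdt])).1 hsq
  linarith

end SharingCost

/-- If `λ̃` is a balancing price of the centralized problem, then the regularized
(energy sharing) problem has a balancing dual price `ζ̂` within
`max(p̄ − d̲, p̲ − d̄)-type` distance `O(1/(I−1))` of `λ̃`. -/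
theorem regularized_dual_price_exists_near_central
    (I : ℕ) (hI : 2 ≤ I) (a m : ℝ) (ha : 0 < a) (hm : 0 < m)
    (f u : Fin I → ℝ → ℝ)
    (hf : ∀ i, ContDiff ℝ 2 (f i)) (hu : ∀ i, ContDiff ℝ 2 (u i))
    (hf'' : ∀ i, ∀ x : ℝ, m ≤ iteratedDeriv 2 (f i) x)
    (hu'' : ∀ i, ∀ x : ℝ, iteratedDeriv 2 (u i) x ≤ -m)
    (plo phi dlo dhi : Fin I → ℝ) (plo0 phi0 dlo0 dhi0 : ℝ)
    (hp : ∀ i, plo0 ≤ plo i ∧ plo i ≤ phi i ∧ phi i ≤ phi0)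
    (hd : ∀ i, dlo0 ≤ dlo i ∧ dlo i ≤ dhi i ∧ dhi i ≤ dhi0)
    (lamTil : ℝ) (ptil dtil : Fin I → ℝ)
    -- `ptil i = f̃_i(λ̃)` : the unique minimizer of `p ↦ f_i(p) − λ̃ p` on `[p̲_i, p̄_i]`
    (hptil : ∀ i, ptil i ∈ Set.Icc (plo i) (phi i) ∧
      ∀ x ∈ Set.Icc (plo i) (phi i),
        f i (ptil i) - lamTil * ptil i ≤ f i x - lamTil * x)
    -- `dtil i = ũ_i(λ̃)` : the unique minimizer of `d ↦ λ̃ d − u_i(d)` on `[d̲_i, d̄_i]`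
    (hdtil : ∀ i, dtil i ∈ Set.Icc (dlo i) (dhi i) ∧
      ∀ x ∈ Set.Icc (dlo i) (dhi i),
        lamTil * dtil i - u i (dtil i) ≤ lamTil * x - u i x)
    -- `λ̃` is a balancing price: `Σ_i (f̃_i(λ̃) − ũ_i(λ̃)) = 0`
    (hbal : ∑ i, (ptil i - dtil i) = 0) :
    ∃ zeta : ℝ,
      lamTil + (plo0 - dhi0) / (a * ((I : ℝ) - 1)) ≤ zeta ∧
      zeta ≤ lamTil + (phi0 - dlo0) / (a * ((I : ℝ) - 1)) ∧
      ∀ phat dhat : Fin I → ℝ,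
        ((∀ i, phat i ∈ Set.Icc (plo i) (phi i) ∧ dhat i ∈ Set.Icc (dlo i) (dhi i)) ∧
          ∀ p d : Fin I → ℝ,
            (∀ i, p i ∈ Set.Icc (plo i) (phi i) ∧ d i ∈ Set.Icc (dlo i) (dhi i)) →
            (∑ i, (f i (phat i) - u i (dhat i) +
                (dhat i - phat i) ^ 2 / (2 * a * ((I : ℝ) - 1)) +
                zeta * (dhat i - phat i))) ≤
              (∑ i, (f i (p i) - u i (d i) +
                (d i - p i) ^ 2 / (2 * a * ((I : ℝ) - 1)) +
                zeta * (d i - p i)))) →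
        ∑ i, phat i = ∑ i, dhat i := by
  have hc : 0 < a * ((I : ℝ) - 1) := mul_pos ha (sub_pos.2 (Nat.one_lt_cast.2 hI))
  set c := a * ((I : ℝ) - 1)
  have hf' i :=
    strongConvexOn_of_le_iteratedDeriv_two (convex_Icc (plo i) (phi i)) (hf i) (hf'' i)
  have hu' i :=
    strongConcaveOn_of_iteratedDeriv_two_le (convex_Icc (dlo i) (dhi i)) (hu i) (hu'' i)
  choose x hxc hx using fun i => exists_continuous_isMinOn_sharingCost (c := c) hc.le hm
    (hf i).continuous (hu i).continuous (hf' i) (hu' i) isCompact_Icc isCompact_Icc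
    (Set.nonempty_Icc.2 (hp i).2.1) (Set.nonempty_Icc.2 (hd i).2.1)
  have hupper : 0 ≤ ∑ i, ((x i (lamTil + (phi0 - dlo0) / c)).1 - (x i _).2) :=
    hbal ▸ sum_le_sum fun i _ => sub_le_of_isMinOn_sharingCost hc (hptil i).2 (hdtil i).2
      (hptil i).1 (hdtil i).1 (hx i _).1 (fun y hy => hy.2.trans (hp i).2.2)
      (fun y hy => (hd i).1.trans hy.1) (hx i _).2
  have hlower : ∑ i, ((x i (lamTil + (plo0 - dhi0) / c)).1 - (x i _).2) ≤ 0 :=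
    hbal ▸ sum_le_sum fun i _ => le_sub_of_isMinOn_sharingCost hc (hptil i).2 (hdtil i).2
      (hptil i).1 (hdtil i).1 (hx i _).1 (fun y hy => (hp i).1.trans hy.1)
      (fun y hy => hy.2.trans (hd i).2.2) (hx i _).2
  have hle : lamTil + (plo0 - dhi0) / c ≤ lamTil + (phi0 - dlo0) / c := by
    let i₀ : Fin I := ⟨0, by omega⟩
    gcongr <;> linarith [hp i₀, hd i₀]
  have hS : Continuous fun ζ => ∑ i, ((x i ζ).1 - (x i ζ).2) := by fun_prop
  obtain ⟨ζ, hζ, hζS⟩ := intermediate_value_Icc hle hS.continuousOn ⟨hlower, hupper⟩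
  refine ⟨ζ, hζ.1, hζ.2, fun phat dhat ⟨hmem, hmin⟩ => ?_⟩
  have hsum := hmin (fun i => (x i ζ).1) (fun i => (x i ζ).2) fun i => (hx i ζ).1
  rw [mul_assoc 2 a] at hsum
  have hagent : (fun i => (phat i, dhat i)) = fun i => x i ζ :=
    eq_of_sum_le_sum_of_isMinOn (φ := fun i => sharingCost (f i) (u i) c ζ)
      (fun i => (strongConvexOn_sharingCost hc.le hm.le (hf' i) (hu' i)).strictConvexOn hm)
      (fun i => (hx i ζ).2) hmem (fun i => (hx i ζ).1) hsum
  simp only [← congrFun hagent, sum_sub_distrib, sub_eq_zero] at hζS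
  exact hζS
end

section
/- Let I ≥ 2, a > 0, m > 0, and for each i ∈ {1,…,I} let f_i, u_i : ℝ → ℝ be twice differentiable with f_i'' ≥ m and −u_i'' ≥ m everywhere, with capacity bounds satisfying p̲ ≤ p̲_i ≤ p̄_i ≤ p̄ and d̲ ≤ d̲_i ≤ d̄_i ≤ d̄. Let λ̃ ∈ ℝ and for each i let p̃_i be the unique minimizer of p ↦ f_i(p) − λ̃p on [p̲_i, p̄_i] and d̃_i the unique minimizer of d ↦ λ̃d − u_i(d) on [d̲_i, d̄_i]. Let ζ̂ ∈ ℝ with |ζ̂ − λ̃| ≤ σ/(I−1), where σ := max(|p̄ − d̲|, |p̲ − d̄|)/a, and let (p̂_i, d̂_i) be the unique minimizer of (p, d) ↦ f_i(p) − u_i(d) + (d − p)²/(2a(I−1)) + ζ̂·(d − p) over [p̲_i, p̄_i] × [d̲_i, d̄_i]. Then for every i, |p̂_i − p̃_i| ≤ 2σ/(m(I−1)) and |d̂_i − d̃_i| ≤ 2σ/(m(I−1)). -/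
/-!
The centralized strategy `p̃ᵢ` minimizes the `m`-strongly convex function `p ↦ fᵢ p - λ̃ p`, and
`p̂ᵢ` minimizes `p ↦ fᵢ p + (p - d̂ᵢ)² / (2a(I-1)) - ζ̂ p` over the same interval, which is again
`m`-strongly convex. A strongly convex function grows at least quadratically away from its
minimizer on a convex set; adding the two growth inequalities bounds `m (p̂ᵢ - p̃ᵢ)²` by the
increment of the difference of the two objectives between `p̃ᵢ` and `p̂ᵢ`. On the box that
difference has slope at most `|ζ̂ - λ̃| + σ/(I-1) ≤ 2σ/(I-1)`, whence the bound; the demand side is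
the same argument applied to `-uᵢ` with `p̂ᵢ` frozen.
-/

open Set Filter Topology

section StrongConvexity

variable {E : Type*} [NormedAddCommGroup E] [NormedSpace ℝ E] {s : Set E} {m : ℝ} {f g h : E → ℝ}

lemma StrongConvexOn.add_convexOn (hf : StrongConvexOn s m f) (hg : ConvexOn ℝ s g) :
    StrongConvexOn s m (f + g) := by
  simpa only [StrongConvexOn, add_zero] using hf.add hg.uniformConvexOn_zero

lemma StrongConvexOn.sq_norm_sub_le_of_isMinOn {x y : E} (hf : StrongConvexOn s m f)
    (hx : x ∈ s) (hy : y ∈ s) (hmin : IsMinOn f s x) :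
    m / 2 * ‖y - x‖ ^ 2 ≤ f y - f x := by
  have hseg : ∀ t ∈ Ioc (0 : ℝ) 1, m / 2 * (1 - t) * ‖y - x‖ ^ 2 ≤ f y - f x := by
    rintro t ⟨ht0, ht1⟩
    have hconv := hf.2 hy hx ht0.le (sub_nonneg.2 ht1) (add_sub_cancel t 1)
    have hle := isMinOn_iff.1 hmin _ (hf.1 hy hx ht0.le (sub_nonneg.2 ht1) (add_sub_cancel t 1))
    simp only [smul_eq_mul] at hconv hle
    -- together: `t * (f y - f x) ≥ t * (1 - t) * (m / 2) * ‖y - x‖²`; divide by `t > 0`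
    nlinarith
  have hlim : Tendsto (fun t : ℝ => m / 2 * (1 - t) * ‖y - x‖ ^ 2) (𝓝[>] 0)
      (𝓝 (m / 2 * ‖y - x‖ ^ 2)) := by
    refine tendsto_nhdsWithin_of_tendsto_nhds (Continuous.tendsto' ?_ 0 _ (by ring))
    fun_prop
  exact le_of_tendsto hlim (mem_of_superset (Ioc_mem_nhdsGT one_pos) hseg)

lemma StrongConvexOn.mul_sq_norm_sub_le_of_isMinOn {x y : E} (hg : StrongConvexOn s m g)
    (hh : StrongConvexOn s m h) (hx : x ∈ s) (hy : y ∈ s) (hgx : IsMinOn g s x)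
    (hhy : IsMinOn h s y) :
    m * ‖y - x‖ ^ 2 ≤ (g y - h y) - (g x - h x) := by
  have hgrowth := hg.sq_norm_sub_le_of_isMinOn hx hy hgx
  have hhgrowth := hh.sq_norm_sub_le_of_isMinOn hy hx hhy
  rw [norm_sub_rev] at hhgrowth
  linarith

lemma StrongConvexOn.norm_sub_le_of_isMinOn {x y : E} {L : ℝ} (hg : StrongConvexOn s m g)
    (hh : StrongConvexOn s m h) (hm : 0 < m) (hL : 0 ≤ L) (hx : x ∈ s) (hy : y ∈ s)
    (hgx : IsMinOn g s x) (hhy : IsMinOn h s y)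
    (hgh : (g y - h y) - (g x - h x) ≤ L * ‖y - x‖) :
    ‖y - x‖ ≤ L / m := by
  have hsq := hg.mul_sq_norm_sub_le_of_isMinOn hh hx hy hgx hhy
  rcases (norm_nonneg (y - x)).eq_or_lt with hzero | hpos
  · rw [← hzero]; positivity
  · rw [le_div_iff₀ hm]
    nlinarith

end StrongConvexity

lemma strongConvexOn_of_iteratedDeriv_two_ge {s : Set ℝ} {m : ℝ} {φ : ℝ → ℝ} (hs : Convex ℝ s)
    (hφ : ContDiff ℝ 2 φ) (hφ'' : ∀ x, m ≤ iteratedDeriv 2 φ x) : StrongConvexOn s m φ := by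
  have hq : ContDiff ℝ 2 (fun x : ℝ => m / 2 * x ^ 2) := by fun_prop
  have hψ : ContDiff ℝ 2 (fun x : ℝ => φ x - m / 2 * x ^ 2) := hφ.sub hq
  have hψ'' : ∀ x, iteratedDeriv 2 (fun x : ℝ => φ x - m / 2 * x ^ 2) x
      = iteratedDeriv 2 φ x - m := by
    intro x
    rw [iteratedDeriv_fun_sub hφ.contDiffAt hq.contDiffAt, iteratedDeriv_const_mul_field,
      iteratedDeriv_pow]
    norm_num
  have hconv : ConvexOn ℝ univ (fun x : ℝ => φ x - m / 2 * x ^ 2) := by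
    refine convexOn_univ_of_deriv2_nonneg (hψ.differentiable two_ne_zero) ?_ fun x => ?_
    · simpa using hψ.differentiable_iteratedDeriv 1 (by norm_num)
    · rw [← iteratedDeriv_eq_iterate, hψ'']
      linarith [hφ'' x]
  rw [strongConvexOn_iff_convex]
  simpa only [Real.norm_eq_abs, sq_abs] using hconv.subset (subset_univ s) hs

lemma convexOn_univ_quadratic {a : ℝ} (ha : 0 ≤ a) (b c : ℝ) :
    ConvexOn ℝ univ (fun x : ℝ => a * x ^ 2 + b * x + c) :=
  ((even_two.convexOn_pow.smul ha).add ((LinearMap.mulLeft ℝ b).convexOn convex_univ)).add_const c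

lemma abs_sub_le_of_isMinOn_of_isMinOn_add_sq {s : Set ℝ} {φ : ℝ → ℝ}
    {m μ ν c k r δ x y : ℝ} (hφ : StrongConvexOn s m φ) (hm : 0 < m) (hk : 0 < k)
    (hδ : |ν - μ| ≤ δ) (hr : ∀ z ∈ s, |z - c| ≤ r) (hx : x ∈ s) (hy : y ∈ s)
    (hxmin : IsMinOn (fun z => φ z - μ * z) s x)
    (hymin : IsMinOn (fun z => φ z + (z - c) ^ 2 / k - ν * z) s y) :
    |y - x| ≤ (δ + 2 * r / k) / m := by
  have hg : StrongConvexOn s m (fun z => φ z - μ * z) := by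
    convert hφ.add_convexOn ((convexOn_univ_quadratic le_rfl (-μ) 0).subset (subset_univ s) hφ.1)
      using 1
    ext z; simp only [Pi.add_apply]; ring
  have hh : StrongConvexOn s m (fun z => φ z + (z - c) ^ 2 / k - ν * z) := by
    convert hφ.add_convexOn ((convexOn_univ_quadratic (inv_nonneg.2 hk.le)
      (-2 * c / k - ν) (c ^ 2 / k)).subset (subset_univ s) hφ.1) using 1
    ext z; simp only [Pi.add_apply]; field_simp; ring
  have hr0 : 0 ≤ r := (abs_nonneg _).trans (hr x hx)
  have hδ0 : 0 ≤ δ := (abs_nonneg _).trans hδ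
  refine hg.norm_sub_le_of_isMinOn hh hm (by positivity) hx hy hxmin hymin ?_
  have hsum : |(y - c) + (x - c)| ≤ 2 * r :=
    (abs_add_le _ _).trans (by linarith [hr y hy, hr x hx])
  have hdiff : (φ y - μ * y - (φ y + (y - c) ^ 2 / k - ν * y))
      - (φ x - μ * x - (φ x + (x - c) ^ 2 / k - ν * x))
      = ((ν - μ) - ((y - c) + (x - c)) / k) * (y - x) := by
    field_simp; ring
  rw [hdiff, Real.norm_eq_abs]
  calc ((ν - μ) - ((y - c) + (x - c)) / k) * (y - x)
      ≤ |(ν - μ) - ((y - c) + (x - c)) / k| * |y - x| := (le_abs_self _).trans_eq (abs_mul _ _)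
    _ ≤ (|ν - μ| + |(y - c) + (x - c)| / k) * |y - x| := by
        gcongr
        rw [← abs_of_pos hk, ← abs_div, abs_of_pos hk]
        exact abs_sub _ _
    _ ≤ (δ + 2 * r / k) * |y - x| := by gcongr

lemma abs_sub_le_max_abs_of_mem_Icc {p d plo phi dlo dhi : ℝ} (hp : p ∈ Icc plo phi)
    (hd : d ∈ Icc dlo dhi) : |d - p| ≤ max |phi - dlo| |plo - dhi| := by
  rw [abs_sub_le_iff]
  constructor
  · exact le_max_of_le_right (by linarith [hp.1, hd.2, neg_abs_le (plo - dhi)])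
  · exact le_max_of_le_left (by linarith [hp.2, hd.1, le_abs_self (phi - dlo)])

open Finset

/-- Individual strategies at the energy sharing equilibrium are within
`2σ/(m(I−1))` of the centralized socially optimal strategies. -/
theorem sharing_strategies_close_to_central
    (I : ℕ) (hI : 2 ≤ I) (a m : ℝ) (ha : 0 < a) (hm : 0 < m)
    (f u : Fin I → ℝ → ℝ)
    (hf : ∀ i, ContDiff ℝ 2 (f i)) (hu : ∀ i, ContDiff ℝ 2 (u i))
    (hf'' : ∀ i, ∀ x : ℝ, m ≤ iteratedDeriv 2 (f i) x)
    (hu'' : ∀ i, ∀ x : ℝ, iteratedDeriv 2 (u i) x ≤ -m)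
    (plo phi dlo dhi : Fin I → ℝ) (plo0 phi0 dlo0 dhi0 : ℝ)
    (hp : ∀ i, plo0 ≤ plo i ∧ plo i ≤ phi i ∧ phi i ≤ phi0)
    (hd : ∀ i, dlo0 ≤ dlo i ∧ dlo i ≤ dhi i ∧ dhi i ≤ dhi0)
    (lamTil zeta : ℝ) (ptil dtil phat dhat : Fin I → ℝ)
    -- `ptil i` minimizes `p ↦ f_i(p) − λ̃ p` on `[p̲_i, p̄_i]`
    (hptil : ∀ i, ptil i ∈ Set.Icc (plo i) (phi i) ∧
      ∀ x ∈ Set.Icc (plo i) (phi i),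
        f i (ptil i) - lamTil * ptil i ≤ f i x - lamTil * x)
    -- `dtil i` minimizes `d ↦ λ̃ d − u_i(d)` on `[d̲_i, d̄_i]`
    (hdtil : ∀ i, dtil i ∈ Set.Icc (dlo i) (dhi i) ∧
      ∀ x ∈ Set.Icc (dlo i) (dhi i),
        lamTil * dtil i - u i (dtil i) ≤ lamTil * x - u i x)
    -- `ζ̂` is close to `λ̃`
    (hzeta : |zeta - lamTil| ≤ (max |phi0 - dlo0| |plo0 - dhi0| / a) / ((I : ℝ) - 1))
    -- `(phat i, dhat i)` minimizes the regularized objective over the box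
    (hhat : ∀ i, (phat i ∈ Set.Icc (plo i) (phi i) ∧ dhat i ∈ Set.Icc (dlo i) (dhi i)) ∧
      ∀ x ∈ Set.Icc (plo i) (phi i), ∀ y ∈ Set.Icc (dlo i) (dhi i),
        f i (phat i) - u i (dhat i) +
            (dhat i - phat i) ^ 2 / (2 * a * ((I : ℝ) - 1)) +
            zeta * (dhat i - phat i) ≤
          f i x - u i y + (y - x) ^ 2 / (2 * a * ((I : ℝ) - 1)) + zeta * (y - x)) :
    ∀ i : Fin I,
      |phat i - ptil i| ≤
        2 * (max |phi0 - dlo0| |plo0 - dhi0| / a) / (m * ((I : ℝ) - 1)) ∧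
      |dhat i - dtil i| ≤
        2 * (max |phi0 - dlo0| |plo0 - dhi0| / a) / (m * ((I : ℝ) - 1)) := by
  intro i
  set R := max |phi0 - dlo0| |plo0 - dhi0|
  set N := (I : ℝ) - 1
  have hN : 0 < N := by
    have : (2 : ℝ) ≤ I := by exact_mod_cast hI
    linarith
  have hk : 0 < 2 * a * N := by positivity
  have hgap : ∀ p ∈ Icc (plo i) (phi i), ∀ d ∈ Icc (dlo i) (dhi i), |d - p| ≤ R :=
    fun p hpi d hdi => abs_sub_le_max_abs_of_mem_Icc
      ⟨(hp i).1.trans hpi.1, hpi.2.trans (hp i).2.2⟩ ⟨(hd i).1.trans hdi.1, hdi.2.trans (hd i).2.2⟩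
  have hbound : (R / a / N + 2 * R / (2 * a * N)) / m = 2 * (R / a) / (m * N) := by
    field_simp; ring
  have hf_strong : StrongConvexOn (Icc (plo i) (phi i)) m (f i) :=
    strongConvexOn_of_iteratedDeriv_two_ge (convex_Icc _ _) (hf i) (hf'' i)
  have hu_strong : StrongConvexOn (Icc (dlo i) (dhi i)) m (fun d => -u i d) :=
    strongConvexOn_of_iteratedDeriv_two_ge (convex_Icc _ _) (hu i).neg fun x => by
      rw [iteratedDeriv_fun_neg]; linarith [hu'' i x]
  obtain ⟨⟨hphat, hdhat⟩, hhat_min⟩ := hhat i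
  rw [← hbound]
  constructor
  · refine abs_sub_le_of_isMinOn_of_isMinOn_add_sq hf_strong hm hk hzeta
      (fun p hpi => abs_sub_comm p (dhat i) ▸ hgap p hpi _ hdhat) (hptil i).1 hphat
      (isMinOn_iff.2 (hptil i).2) (isMinOn_iff.2 fun p hpi => ?_)
    have := hhat_min p hpi _ hdhat
    rw [sub_sq_comm (dhat i), sub_sq_comm (dhat i)] at this
    linarith
  · refine abs_sub_le_of_isMinOn_of_isMinOn_add_sq (μ := -lamTil) (ν := -zeta) hu_strong hm hk
      (by rwa [neg_sub_neg, abs_sub_comm]) (fun d hdi => hgap _ hphat d hdi) (hdtil i).1 hdhat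
      (isMinOn_iff.2 fun d hdi => ?_) (isMinOn_iff.2 fun d hdi => ?_)
    · have := (hdtil i).2 d hdi
      linarith
    · have := hhat_min _ hphat d hdi
      linarith
end

section
/- Let I ≥ 2 be an integer, a > 0, m > 0 with a·m ≥ (2I−4)/(I−1). Then for all real numbers c_1,…,c_I, e_1,…,e_I with c_i ≥ m and e_i ≥ m for each i, and all real numbers x_{1,1}, x_{1,2}, …, x_{I,1}, x_{I,2}, the following inequality holds: Σ_{i=1}^I (c_i·x_{i,1}² + e_i·x_{i,2}²) + (1/(a(I−1)))·Σ_{i=1}^I (x_{i,1} − x_{i,2})² − (1/(aI))·(Σ_{i=1}^I (x_{i,1} − x_{i,2}))² ≥ 0. -/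
/-!
Write `y i = x1 i - x2 i` and `t = (I - 2) / (a (I - 1))`, so that `1 / (a (I - 1)) = 1 / a - t`.
By Cauchy–Schwarz, `(∑ y i)² / I ≤ ∑ (y i)²`, so the two coupling terms are at least `-t ∑ (y i)²`.
Condition A4 says exactly `2 t ≤ m`, and then each summand `t (y i)² ≤ 2 t (x1 i² + x2 i²)` is
absorbed by `c i x1 i² + e i x2 i²`.
-/

open Finset

lemma mul_sq_sub_le_of_two_mul_le {α : Type*} [CommRing α] [LinearOrder α] [IsStrictOrderedRing α]
    {t c e x y : α} (ht : 0 ≤ t) (hc : 2 * t ≤ c) (he : 2 * t ≤ e) :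
    t * (x - y) ^ 2 ≤ c * x ^ 2 + e * y ^ 2 :=
  calc t * (x - y) ^ 2 ≤ t * (2 * (x ^ 2 + (-y) ^ 2)) := by
        gcongr
        simpa [sub_eq_add_neg] using add_sq_le (a := x) (b := -y)
    _ = 2 * t * x ^ 2 + 2 * t * y ^ 2 := by ring
    _ ≤ c * x ^ 2 + e * y ^ 2 := by gcongr

lemma sq_sum_div_card_le_sum_sq {ι α : Type*} [Fintype ι] [Field α] [LinearOrder α]
    [IsStrictOrderedRing α] (y : ι → α) :
    (∑ i, y i) ^ 2 / Fintype.card ι ≤ ∑ i, y i ^ 2 := by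
  rcases isEmpty_or_nonempty ι with hι | hι
  · simp
  rw [div_le_iff₀' (by positivity)]
  exact sq_sum_le_card_mul_sum_sq

theorem potential_hessian_psd_general
    (I : ℕ) (hI : 2 ≤ I) (a m : ℝ) (ha : 0 < a)
    (ham : (2 * (I : ℝ) - 4) / ((I : ℝ) - 1) ≤ a * m)
    (c e : Fin I → ℝ) (hc : ∀ i, m ≤ c i) (he : ∀ i, m ≤ e i)
    (x1 x2 : Fin I → ℝ) :
    0 ≤ ∑ i, (c i * (x1 i) ^ 2 + e i * (x2 i) ^ 2) +
        (1 / (a * ((I : ℝ) - 1))) * ∑ i, (x1 i - x2 i) ^ 2 -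
        (1 / (a * (I : ℝ))) * (∑ i, (x1 i - x2 i)) ^ 2 := by
  have hI' : (2 : ℝ) ≤ I := by exact_mod_cast hI
  have hI1 : (I : ℝ) - 1 ≠ 0 := by linarith
  set t := ((I : ℝ) - 2) / (a * ((I : ℝ) - 1)) with ht_def
  have ht : 0 ≤ t := div_nonneg (by linarith) (mul_nonneg ha.le (by linarith))
  have h2t : 2 * t ≤ m := by
    calc 2 * t = (2 * (I : ℝ) - 4) / ((I : ℝ) - 1) / a := by
          rw [ht_def]; field_simp; ring
      _ ≤ m := by rw [div_le_iff₀ ha]; linarith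
  have hcoef : 1 / (a * ((I : ℝ) - 1)) = 1 / a - t := by
    rw [ht_def]; field_simp; ring
  have hpoint : t * ∑ i, (x1 i - x2 i) ^ 2 ≤ ∑ i, (c i * (x1 i) ^ 2 + e i * (x2 i) ^ 2) := by
    rw [mul_sum]
    exact sum_le_sum fun i _ =>
      mul_sq_sub_le_of_two_mul_le ht (h2t.trans (hc i)) (h2t.trans (he i))
  have hcs : 1 / (a * (I : ℝ)) * (∑ i, (x1 i - x2 i)) ^ 2 ≤ 1 / a * ∑ i, (x1 i - x2 i) ^ 2 := by
    have := sq_sum_div_card_le_sum_sq fun i => x1 i - x2 i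
    rw [Fintype.card_fin] at this
    calc 1 / (a * (I : ℝ)) * (∑ i, (x1 i - x2 i)) ^ 2
        = 1 / a * ((∑ i, (x1 i - x2 i)) ^ 2 / I) := by ring
      _ ≤ 1 / a * ∑ i, (x1 i - x2 i) ^ 2 := by gcongr
  rw [hcoef]
  linarith

/-- Positive semidefiniteness of the Hessian of the energy sharing potential function
under the market-sensitivity condition A4. -/
theorem potential_hessian_psd
    (I : ℕ) (hI : 2 ≤ I) (a m : ℝ) (ha : 0 < a) (hm : 0 < m)
    (ham : (2 * (I : ℝ) - 4) / ((I : ℝ) - 1) ≤ a * m)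
    (c e : Fin I → ℝ) (hc : ∀ i, m ≤ c i) (he : ∀ i, m ≤ e i)
    (x1 x2 : Fin I → ℝ) :
    0 ≤ ∑ i, (c i * (x1 i) ^ 2 + e i * (x2 i) ^ 2) +
        (1 / (a * ((I : ℝ) - 1))) * ∑ i, (x1 i - x2 i) ^ 2 -
        (1 / (a * (I : ℝ))) * (∑ i, (x1 i - x2 i)) ^ 2 :=
  potential_hessian_psd_general I hI a m ha ham c e hc he x1 x2
end

section
/- Let I ≥ 2 be an integer, a > 0, m > 0 with a·m ≥ (2I−4)/(I−1), and for each i ∈ {1,…,I} let f_i, u_i : ℝ → ℝ be twice differentiable with f_i''(x) ≥ m and −u_i''(x) ≥ m for all x. Then the function φ : ℝ^I × ℝ^I → ℝ, φ(p, d) = Σ_{i=1}^I f_i(p_i) − Σ_{i=1}^I u_i(d_i) + (Σ_{i=1}^I (d_i − p_i)²)/(2a(I−1)) − (Σ_{i=1}^I d_i − Σ_{i=1}^I p_i)²/(2aI), is convex on ℝ^I × ℝ^I. -/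
/-!
Subtracting `m / 2 * t ^ 2` from each `f i` and each `-u i` leaves convex functions, since
their second derivatives stay nonnegative. What remains of `φ` is a quadratic form: with
`x = d - p`, and `‖p‖² + ‖d‖² = (‖p + d‖² + ‖x‖²) / 2`, it equals
`m / 4 * ‖p + d‖² + α * ‖x‖² - β * (∑ i, x i) ^ 2` for `α = m / 4 + 1 / (2a(I - 1))` and
`β = 1 / (2aI)`. Since `∑ i, ∑ j, (x i - x j) ^ 2 = 2I‖x‖² - 2(∑ i, x i) ^ 2`, the last two
terms are `(α - Iβ) * ‖x‖² + β / 2 * ∑ i, ∑ j, (x i - x j) ^ 2`, a nonnegative combination of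
convex functions as soon as `α - Iβ = (a * m - (2I - 4) / (I - 1)) / (4a) ≥ 0`, which is A4.
-/

open Finset Set

section ConvexOn

variable {𝕜 E F β ι : Type*} [Semiring 𝕜] [PartialOrder 𝕜] [AddCommMonoid E] [AddCommMonoid F]
  [AddCommMonoid β] [PartialOrder β]

theorem ConvexOn.comp_linearMap_univ [Module 𝕜 E] [Module 𝕜 F] [SMul 𝕜 β] {f : F → β}
    (hf : ConvexOn 𝕜 univ f) (ℓ : E →ₗ[𝕜] F) : ConvexOn 𝕜 univ fun x => f (ℓ x) := by
  rw [← preimage_univ (f := ℓ)]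
  exact hf.comp_linearMap ℓ

theorem ConvexOn.sum [IsOrderedAddMonoid β] [SMul 𝕜 E] [Module 𝕜 β] {s : Set E}
    {f : ι → E → β} (t : Finset ι) (hs : Convex 𝕜 s) (hf : ∀ i ∈ t, ConvexOn 𝕜 s (f i)) :
    ConvexOn 𝕜 s fun x => ∑ i ∈ t, f i x := by
  induction t using Finset.cons_induction with
  | empty => simpa using convexOn_const 0 hs
  | cons i t _ ih =>
    simp only [sum_cons]
    exact (hf i (mem_cons_self i t)).add (ih fun j hj => hf j (mem_cons_of_mem hj))

end ConvexOn

theorem Finset.sum_sum_sub_sq {ι R : Type*} [CommRing R] (s : Finset ι) (x : ι → R) :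
    ∑ i ∈ s, ∑ j ∈ s, (x i - x j) ^ 2 = 2 * #s * ∑ i ∈ s, x i ^ 2 - 2 * (∑ i ∈ s, x i) ^ 2 := by
  simp only [sub_sq, sum_add_distrib, sum_sub_distrib, sum_const, nsmul_eq_mul, ← mul_sum,
    ← sum_mul]
  ring

section Quadratic

variable {ι : Type*} [Fintype ι]

theorem convexOn_univ_sum_apply {g : ι → ℝ → ℝ} (hg : ∀ i, ConvexOn ℝ univ (g i)) :
    ConvexOn ℝ univ fun x : ι → ℝ => ∑ i, g i (x i) :=
  ConvexOn.sum _ convex_univ fun i _ =>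
    (hg i).comp_linearMap_univ (LinearMap.proj (R := ℝ) (φ := fun _ : ι => ℝ) i)

theorem convexOn_univ_mul_sum_sq_sub_mul_sq_sum {α β : ℝ} (hβ : 0 ≤ β)
    (hαβ : Fintype.card ι * β ≤ α) :
    ConvexOn ℝ univ fun x : ι → ℝ => α * ∑ i, x i ^ 2 - β * (∑ i, x i) ^ 2 := by
  have hsq : ConvexOn ℝ univ fun x : ι → ℝ => ∑ i, x i ^ 2 :=
    convexOn_univ_sum_apply fun _ => even_two.convexOn_pow
  have hdiff : ConvexOn ℝ univ fun x : ι → ℝ => ∑ i, ∑ j, (x i - x j) ^ 2 :=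
    ConvexOn.sum _ convex_univ fun i _ => ConvexOn.sum _ convex_univ fun j _ =>
      even_two.convexOn_pow.comp_linearMap_univ
        (LinearMap.proj (R := ℝ) (φ := fun _ : ι => ℝ) i - LinearMap.proj j)
  refine ((hsq.smul (sub_nonneg.2 hαβ)).add (hdiff.smul (div_nonneg hβ zero_le_two))).congr
    fun x _ => ?_
  simp only [Pi.add_apply, smul_eq_mul, sum_sum_sub_sq, card_univ]
  ring

end Quadratic

theorem ContDiff.convexOn_univ_sub_half_mul_sq {g : ℝ → ℝ} {m : ℝ} (hg : ContDiff ℝ 2 g)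
    (hm : ∀ x, m ≤ iteratedDeriv 2 g x) : ConvexOn ℝ univ fun x => g x - m / 2 * x ^ 2 := by
  have h : ContDiff ℝ 2 fun x => g x - m / 2 * x ^ 2 := hg.sub (by fun_prop)
  refine convexOn_univ_of_deriv2_nonneg (h.differentiable (by norm_num)) ?_ fun x => ?_
  · simpa using h.differentiable_iteratedDeriv 1 (by norm_num)
  · rw [← iteratedDeriv_eq_iterate, iteratedDeriv_fun_sub hg.contDiffAt (by fun_prop)]
    simpa using hm x

/-- Under assumption A4, the potential function `φ` of the energy sharing game is
convex on `ℝ^I × ℝ^I`. -/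
theorem potential_convex
    (I : ℕ) (hI : 2 ≤ I) (a m : ℝ) (ha : 0 < a) (hm : 0 < m)
    (ham : (2 * (I : ℝ) - 4) / ((I : ℝ) - 1) ≤ a * m)
    (f u : Fin I → ℝ → ℝ)
    (hf : ∀ i, ContDiff ℝ 2 (f i)) (hu : ∀ i, ContDiff ℝ 2 (u i))
    (hf'' : ∀ i, ∀ x : ℝ, m ≤ iteratedDeriv 2 (f i) x)
    (hu'' : ∀ i, ∀ x : ℝ, iteratedDeriv 2 (u i) x ≤ -m) :
    ConvexOn ℝ Set.univ
      (fun pd : (Fin I → ℝ) × (Fin I → ℝ) =>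
        ∑ i, f i (pd.1 i) - ∑ i, u i (pd.2 i) +
          (∑ i, (pd.2 i - pd.1 i) ^ 2) / (2 * a * ((I : ℝ) - 1)) -
          (∑ i, pd.2 i - ∑ i, pd.1 i) ^ 2 / (2 * a * (I : ℝ))) := by
  have hI1 : (0 : ℝ) < I - 1 := by linarith [show (2 : ℝ) ≤ I by exact_mod_cast hI]
  have hA4 : (Fintype.card (Fin I) : ℝ) * (1 / (2 * a * I)) ≤ m / 4 + 1 / (2 * a * (I - 1)) := by
    have hslack : m / 4 + 1 / (2 * a * (I - 1)) - I * (1 / (2 * a * I))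
        = (a * m - (2 * I - 4) / (I - 1)) / (4 * a) := by
      field_simp
      ring
    rw [Fintype.card_fin]
    linarith [div_nonneg (sub_nonneg.2 ham) (by positivity : (0 : ℝ) ≤ 4 * a)]
  have hp := (convexOn_univ_sum_apply fun i => (hf i).convexOn_univ_sub_half_mul_sq (hf'' i))
    |>.comp_linearMap_univ (LinearMap.fst ℝ _ (Fin I → ℝ))
  have hd := (convexOn_univ_sum_apply fun i => (hu i).neg.convexOn_univ_sub_half_mul_sq
    fun x => by simpa using le_neg.1 (hu'' i x))
    |>.comp_linearMap_univ (LinearMap.snd ℝ (Fin I → ℝ) _)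
  have hs := (convexOn_univ_sum_apply fun _ =>
    even_two.convexOn_pow.smul (by positivity : 0 ≤ m / 4))
    |>.comp_linearMap_univ (LinearMap.fst ℝ (Fin I → ℝ) (Fin I → ℝ) + LinearMap.snd ℝ _ _)
  have hx := (convexOn_univ_mul_sum_sq_sub_mul_sq_sum (by positivity) hA4)
    |>.comp_linearMap_univ (LinearMap.snd ℝ (Fin I → ℝ) (Fin I → ℝ) - LinearMap.fst ℝ _ _)
  refine (((hp.add hd).add hs).add hx).congr fun ⟨p, d⟩ _ => ?_
  have hpar : ∑ i, (p i + d i) ^ 2 + ∑ i, (d i - p i) ^ 2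
      = 2 * ∑ i, p i ^ 2 + 2 * ∑ i, d i ^ 2 := by
    simp only [← sum_add_distrib, mul_sum]
    exact sum_congr rfl fun i _ => by ring
  simp only [Pi.add_apply, LinearMap.add_apply, LinearMap.sub_apply, LinearMap.fst_apply,
    LinearMap.snd_apply, Pi.sub_apply, smul_eq_mul, sum_sub_distrib, sum_neg_distrib, ← mul_sum]
  linear_combination (m / 4) * hpar
end

section
/- Let n ≥ 1, let Y ⊆ ℝⁿ be a nonempty convex set, φ : ℝⁿ → ℝ a convex function, v ∈ ℝⁿ, and c > 0. Let λ⁰ ∈ ℝ, let y⁺ ∈ Y minimize y ↦ φ(y) − λ⁰·⟨v, y⟩ + (c/2)·⟨v, y⟩² over Y, and set λ⁺ = λ⁰ − c·⟨v, y⁺⟩. If (y*, λ*) ∈ Y × ℝ is a saddle point of L(y, λ) := φ(y) − λ·⟨v, y⟩ on Y × ℝ, then (λ⁺ − λ*)·(λ⁰ − λ⁺) ≥ 0, and consequently (λ⁺ − λ*)² ≤ (λ⁰ − λ*)² − (λ⁰ − λ⁺)². -/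
/-!
The saddle inequality in `λ` forces `⟨v, y*⟩ = 0`. Minimality of `y⁺` for the convex objective
`φ(y) + g(⟨v, y⟩)` with `g(t) = (c/2) t² − λ⁰ t` yields the first-order condition
`φ(y⁺) ≤ φ(y) + g'(⟨v, y⁺⟩) (⟨v, y⟩ − ⟨v, y⁺⟩)` on `Y`, where `g'(⟨v, y⁺⟩) = −λ⁺`. At `y = y*`
this combines with the saddle inequality in `y` at `y⁺` into `(λ⁺ − λ*) ⟨v, y⁺⟩ ≥ 0`, and
`λ⁰ − λ⁺ = c ⟨v, y⁺⟩`. The second claim then follows from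
`(λ⁰ − λ*)² = (λ⁰ − λ⁺)² + (λ⁺ − λ*)² + 2 (λ⁺ − λ*)(λ⁰ − λ⁺)`.
-/

open Set

theorem eq_zero_of_forall_mul_le {t μ : ℝ} (h : ∀ lam : ℝ, μ * t ≤ lam * t) : t = 0 := by
  linarith [h (μ + 1), h (μ - 1)]

theorem IsMinOn.le_add_deriv_mul_sub_of_convexOn {E : Type*} [AddCommGroup E] [Module ℝ E]
    {Y : Set E} {φ : E → ℝ} {g : ℝ → ℝ} {g' : ℝ} {x y : E} (ℓ : E →ₗ[ℝ] ℝ)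
    (hφ : ConvexOn ℝ Y φ) (hmin : IsMinOn (fun z => φ z + g (ℓ z)) Y x)
    (hg : HasDerivAt g g' (ℓ x)) (hx : x ∈ Y) (hy : y ∈ Y) :
    φ x ≤ φ y + g' * (ℓ y - ℓ x) := by
  -- restrict to the segment from `x` to `y`, with the convexity bound in place of `φ`
  set h : ℝ → ℝ := fun θ => θ * (φ y - φ x) + g (ℓ x + θ * (ℓ y - ℓ x))
  have h_min : IsMinOn h (Icc 0 1) 0 := by
    refine isMinOn_iff.2 fun θ ⟨hθ0, hθ1⟩ => ?_
    have hz := isMinOn_iff.1 hmin _ (hφ.1 hx hy (sub_nonneg.2 hθ1) hθ0 (sub_add_cancel 1 θ))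
    have hφz := hφ.2 hx hy (sub_nonneg.2 hθ1) hθ0 (sub_add_cancel 1 θ)
    simp only [map_add, map_smul, smul_eq_mul] at hz hφz
    rw [show (1 - θ) * ℓ x + θ * ℓ y = ℓ x + θ * (ℓ y - ℓ x) by ring] at hz
    simp only [h, zero_mul, add_zero]
    linarith
  have h_deriv : HasDerivAt h (φ y - φ x + g' * (ℓ y - ℓ x)) 0 := by
    have hseg := ((hasDerivAt_id' (0 : ℝ)).mul_const (ℓ y - ℓ x)).const_add (ℓ x)
    have := ((hasDerivAt_id' (0 : ℝ)).mul_const (φ y - φ x)).fun_add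
      (hg.comp_of_eq 0 hseg (by ring))
    rwa [one_mul, one_mul] at this
  have hslope := h_min.localize.hasFDerivWithinAt_nonneg
    h_deriv.hasFDerivAt.hasFDerivWithinAt (y := 1)
    (mem_posTangentConeAt_of_segment_subset (by rw [zero_add, segment_eq_Icc zero_le_one]))
  rw [ContinuousLinearMap.toSpanSingleton_apply, one_smul] at hslope
  linarith

theorem bidding_iteration_fejer_general
    (n : ℕ)
    (Y : Set (Fin n → ℝ)) (hYconv : Convex ℝ Y)
    (φ : (Fin n → ℝ) → ℝ) (hφ : ConvexOn ℝ Set.univ φ)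
    (v : Fin n → ℝ) (c : ℝ) (hc : 0 < c)
    (lam0 : ℝ) (yp : Fin n → ℝ) (hyp : yp ∈ Y)
    -- `y⁺` minimizes the regularized objective over `Y`
    (hypmin : ∀ y ∈ Y,
      φ yp - lam0 * (∑ i, v i * yp i) + (c / 2) * (∑ i, v i * yp i) ^ 2 ≤
        φ y - lam0 * (∑ i, v i * y i) + (c / 2) * (∑ i, v i * y i) ^ 2)
    -- saddle point of `L(y, λ) = φ(y) − λ⟨v, y⟩`
    (ystar : Fin n → ℝ) (lamstar : ℝ) (hystar : ystar ∈ Y)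
    (hsaddle₁ : ∀ lam : ℝ,
      φ ystar - lam * (∑ i, v i * ystar i) ≤
        φ ystar - lamstar * (∑ i, v i * ystar i))
    (hsaddle₂ : ∀ y ∈ Y,
      φ ystar - lamstar * (∑ i, v i * ystar i) ≤
        φ y - lamstar * (∑ i, v i * y i)) :
    0 ≤ ((lam0 - c * (∑ i, v i * yp i)) - lamstar) *
        (lam0 - (lam0 - c * (∑ i, v i * yp i))) ∧
      ((lam0 - c * (∑ i, v i * yp i)) - lamstar) ^ 2 ≤
        (lam0 - lamstar) ^ 2 - (lam0 - (lam0 - c * (∑ i, v i * yp i))) ^ 2 := by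
  set ℓ := dotProductBilin ℝ ℝ v
  have hℓ (y : Fin n → ℝ) : ℓ y = ∑ i, v i * y i := rfl
  set s := ∑ i, v i * yp i
  have hbalance : ∑ i, v i * ystar i = 0 :=
    eq_zero_of_forall_mul_le (μ := lamstar) fun lam => by linarith [hsaddle₁ lam]
  have hg : HasDerivAt (fun t => c / 2 * t ^ 2 - lam0 * t) (c * s - lam0) (ℓ yp) := by
    refine (((hasDerivAt_pow 2 (ℓ yp)).const_mul (c / 2)).sub
      ((hasDerivAt_id' _).const_mul lam0)).congr_deriv ?_
    rw [hℓ]; ring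
  have hopt := IsMinOn.le_add_deriv_mul_sub_of_convexOn ℓ (hφ.subset (subset_univ Y) hYconv)
    (isMinOn_iff.2 fun y hy => by simp only [hℓ]; linarith [hypmin y hy]) hg hyp hystar
  have hsad := hsaddle₂ yp hyp
  rw [hℓ, hℓ, hbalance] at hopt
  rw [hbalance] at hsad
  have hdual : 0 ≤ (lam0 - c * s - lamstar) * s := by linarith
  have hmain : 0 ≤ (lam0 - c * s - lamstar) * (lam0 - (lam0 - c * s)) := by
    linarith [mul_nonneg hdual hc.le]
  exact ⟨hmain, by linarith⟩

/-- Per-iteration Fejér monotonicity of the price iterates of the energy sharing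
bidding process. -/
theorem bidding_iteration_fejer
    (n : ℕ) (hn : 1 ≤ n)
    (Y : Set (Fin n → ℝ)) (hYne : Y.Nonempty) (hYconv : Convex ℝ Y)
    (φ : (Fin n → ℝ) → ℝ) (hφ : ConvexOn ℝ Set.univ φ)
    (v : Fin n → ℝ) (c : ℝ) (hc : 0 < c)
    (lam0 : ℝ) (yp : Fin n → ℝ) (hyp : yp ∈ Y)
    -- `y⁺` minimizes the regularized objective over `Y`
    (hypmin : ∀ y ∈ Y,
      φ yp - lam0 * (∑ i, v i * yp i) + (c / 2) * (∑ i, v i * yp i) ^ 2 ≤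
        φ y - lam0 * (∑ i, v i * y i) + (c / 2) * (∑ i, v i * y i) ^ 2)
    -- saddle point of `L(y, λ) = φ(y) − λ⟨v, y⟩`
    (ystar : Fin n → ℝ) (lamstar : ℝ) (hystar : ystar ∈ Y)
    (hsaddle₁ : ∀ lam : ℝ,
      φ ystar - lam * (∑ i, v i * ystar i) ≤
        φ ystar - lamstar * (∑ i, v i * ystar i))
    (hsaddle₂ : ∀ y ∈ Y,
      φ ystar - lamstar * (∑ i, v i * ystar i) ≤
        φ y - lamstar * (∑ i, v i * y i)) :
    0 ≤ ((lam0 - c * (∑ i, v i * yp i)) - lamstar) *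
        (lam0 - (lam0 - c * (∑ i, v i * yp i))) ∧
      ((lam0 - c * (∑ i, v i * yp i)) - lamstar) ^ 2 ≤
        (lam0 - lamstar) ^ 2 - (lam0 - (lam0 - c * (∑ i, v i * yp i))) ^ 2 :=
  bidding_iteration_fejer_general n Y hYconv φ hφ v c hc lam0 yp hyp hypmin ystar lamstar hystar
    hsaddle₁ hsaddle₂
end

section
/- Let W ⊆ ℝ be nonempty, and let (λᵏ)_{k≥0} be a real sequence such that for every λ* ∈ W and every k, (λᵏ⁺¹ − λ*)² ≤ (λᵏ − λ*)² − (λᵏ − λᵏ⁺¹)², and such that every cluster point of (λᵏ) belongs to W. Then (λᵏ) converges to some point of W. -/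
/-!
Distances to points of `W` never increase, so the sequence stays in a compact ball and has a
cluster point `x`, which lies in `W`. The distance to `x` is then nonincreasing and comes
arbitrarily close to `0`, hence tends to `0`.
-/

open Filter Topology

section FejerMonotone

variable {ι X : Type*} [PseudoMetricSpace X]

theorem tendsto_of_antitone_dist_of_mapClusterPt [Preorder ι] {u : ι → X} {x : X}
    (hu : Antitone fun i => dist (u i) x) (hx : MapClusterPt x atTop u) :
    Tendsto u atTop (𝓝 x) := by
  refine Metric.tendsto_nhds.2 fun ε hε => ?_
  obtain ⟨i₀, hi₀⟩ := (hx.frequently (Metric.ball_mem_nhds x hε)).exists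
  exact (eventually_ge_atTop i₀).mono fun i hi => (hu hi).trans_lt hi₀

theorem exists_tendsto_of_antitone_dist [SemilatticeSup ι] [Nonempty ι] [ProperSpace X]
    {W : Set X} (hW : W.Nonempty) {u : ι → X} (hu : ∀ w ∈ W, Antitone fun i => dist (u i) w)
    (hcluster : ∀ x, MapClusterPt x atTop u → x ∈ W) :
    ∃ x ∈ W, Tendsto u atTop (𝓝 x) := by
  obtain ⟨w, hw⟩ := hW
  obtain ⟨i₀⟩ := ‹Nonempty ι›
  have hball : ∀ᶠ i in atTop, u i ∈ Metric.closedBall w (dist (u i₀) w) :=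
    (eventually_ge_atTop i₀).mono fun i hi => hu w hw hi
  obtain ⟨x, -, hx⟩ :=
    (isCompact_closedBall w (dist (u i₀) w)).exists_mapClusterPt_of_frequently hball.frequently
  have hxW := hcluster x hx
  exact ⟨x, hxW, tendsto_of_antitone_dist_of_mapClusterPt (hu x hxW) hx⟩

end FejerMonotone

theorem Real.dist_le_of_sq_le_sq_sub_sq {a b w : ℝ}
    (h : (b - w) ^ 2 ≤ (a - w) ^ 2 - (a - b) ^ 2) :
    dist b w ≤ dist a w := by
  rw [Real.dist_eq, Real.dist_eq, ← sq_le_sq]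
  linarith [sq_nonneg (a - b)]

/-- Fejér-monotone convergence: if a real sequence is Fejér monotone with respect to a
nonempty set `W` (with the stated quantitative decrease) and all its cluster points lie
in `W`, then it converges to a point of `W`. -/
theorem fejer_monotone_convergence
    (W : Set ℝ) (hW : W.Nonempty) (lam : ℕ → ℝ)
    (hfejer : ∀ lamstar ∈ W, ∀ k : ℕ,
      (lam (k + 1) - lamstar) ^ 2 ≤
        (lam k - lamstar) ^ 2 - (lam k - lam (k + 1)) ^ 2)
    (hcluster : ∀ x : ℝ, MapClusterPt x atTop lam → x ∈ W) :
    ∃ lamstar ∈ W, Tendsto lam atTop (nhds lamstar) :=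
  exists_tendsto_of_antitone_dist hW
    (fun w hw => antitone_nat_of_succ_le fun k =>
      Real.dist_le_of_sq_le_sq_sub_sq (hfejer w hw k))
    hcluster
end

section
/- Let n ≥ 1, let Y ⊆ ℝⁿ be a nonempty compact convex set, φ : ℝⁿ → ℝ a continuous convex function, v ∈ ℝⁿ, and c > 0. Define L(y, λ) = φ(y) − λ·⟨v, y⟩ and suppose L has a saddle point on Y × ℝ. Starting from any λ⁰ ∈ ℝ, define iterates by choosing yᵏ⁺¹ ∈ argmin_{y ∈ Y} [φ(y) − λᵏ·⟨v, y⟩ + (c/2)·⟨v, y⟩²] and setting λᵏ⁺¹ = λᵏ − c·⟨v, yᵏ⁺¹⟩. Then the sequence (λᵏ) converges to some λ* ∈ ℝ such that (y*, λ*) is a saddle point of L on Y × ℝ for some y* ∈ Y. -/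
open Finset Filter

/-!
The iteration is the method of multipliers for minimising `φ` on `Y` subject to `⟨v, y⟩ = 0`.
By convexity, the first-order condition of the augmented step says that `yᵏ⁺¹` minimises the plain
Lagrangian at the updated price `λᵏ⁺¹`. Comparing with a saddle point `(y*, μ)` gives
`(λᵏ⁺¹ - μ)⟨v, yᵏ⁺¹⟩ ≥ 0`, hence `(λᵏ⁺¹ - μ)² + c²⟨v, yᵏ⁺¹⟩² ≤ (λᵏ - μ)²`: the prices are Fejér
monotone with respect to every saddle price. They are therefore bounded, every limit of a
subsequence is again a saddle price, and Fejér monotonicity with respect to that limit forces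
convergence of the whole sequence.
-/

theorem tendsto_of_antitone_dist_of_tendsto_comp {X : Type*} [PseudoMetricSpace X] {x : ℕ → X}
    {p : X} {ψ : ℕ → ℕ} (hd : Antitone fun k => dist (x k) p) (hψ : Tendsto ψ atTop atTop)
    (hx : Tendsto (x ∘ ψ) atTop (nhds p)) : Tendsto x atTop (nhds p) := by
  rw [tendsto_iff_dist_tendsto_zero] at hx ⊢
  exact (tendsto_iff_tendsto_subseq_of_antitone hd hψ).2 hx

theorem tendsto_sub_succ_of_antitone {D : ℕ → ℝ} (hD : Antitone D) (hb : BddBelow (Set.range D)) :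
    Tendsto (fun k => D k - D (k + 1)) atTop (nhds 0) := by
  have h := tendsto_atTop_ciInf hD hb
  simpa using h.sub (h.comp (tendsto_add_atTop_nat 1))

theorem nonpos_of_forall_le_mul {A K : ℝ} (h : ∀ t : ℝ, 0 < t → t ≤ 1 → A ≤ K * t) : A ≤ 0 := by
  have hlim : Tendsto (fun t => K * t) (nhdsWithin 0 (Set.Ioi 0)) (nhds 0) :=
    tendsto_nhdsWithin_of_tendsto_nhds ((continuous_const_mul K).tendsto' 0 0 (mul_zero K))
  refine ge_of_tendsto hlim ?_
  filter_upwards [Ioo_mem_nhdsGT (zero_lt_one' ℝ)] with t ht using h t ht.1 ht.2.le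

theorem isSaddlePointOn_univ_iff {E F β : Type*} [Preorder β] {X : Set E} {f : E → F → β} {a : E}
    {b : F} (ha : a ∈ X) :
    IsSaddlePointOn X Set.univ f a b ↔ (∀ y, f a y ≤ f a b) ∧ ∀ x ∈ X, f a b ≤ f x b :=
  ⟨fun h => ⟨fun y => h a ha y trivial, fun x hx => h x hx b trivial⟩,
    fun h x hx y _ => (h.1 y).trans (h.2 x hx)⟩

theorem IsSaddlePointOn.of_forall_le {E F β : Type*} [Preorder β] {X : Set E} {Y : Set F}
    {f : E → F → β} {a : E} {b b' : F} (h : IsSaddlePointOn X Y f a b) (ha : a ∈ X)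
    (hle : ∀ x ∈ X, f a b ≤ f x b') : IsSaddlePointOn X Y f a b' :=
  fun x hx y hy => (h a ha y hy).trans (hle x hx)

section DualStep

variable {c μ : ℝ} {lam s : ℕ → ℝ}

theorem two_mul_mul_le_sq_sub_sq_of_dualStep (hlam : ∀ k, lam (k + 1) = lam k - c * s k) (k : ℕ) :
    2 * c * ((lam (k + 1) - μ) * s k) ≤ (lam k - μ) ^ 2 - (lam (k + 1) - μ) ^ 2 := by
  rw [hlam k]
  nlinarith [sq_nonneg (c * s k)]

theorem antitone_sq_of_dualStep (hc : 0 ≤ c) (hlam : ∀ k, lam (k + 1) = lam k - c * s k)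
    (hs : ∀ k, 0 ≤ (lam (k + 1) - μ) * s k) : Antitone fun k => (lam k - μ) ^ 2 :=
  antitone_nat_of_succ_le fun k => by
    nlinarith [two_mul_mul_le_sq_sub_sq_of_dualStep (μ := μ) hlam k, mul_nonneg hc (hs k)]

theorem antitone_dist_of_dualStep (hc : 0 ≤ c) (hlam : ∀ k, lam (k + 1) = lam k - c * s k)
    (hs : ∀ k, 0 ≤ (lam (k + 1) - μ) * s k) : Antitone fun k => dist (lam k) μ := fun _ _ hkl => by
  simpa only [Real.dist_eq, sq_le_sq] using antitone_sq_of_dualStep hc hlam hs hkl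

theorem tendsto_mul_zero_of_dualStep (hc : 0 < c) (hlam : ∀ k, lam (k + 1) = lam k - c * s k)
    (hs : ∀ k, 0 ≤ (lam (k + 1) - μ) * s k) :
    Tendsto (fun k => (lam (k + 1) - μ) * s k) atTop (nhds 0) := by
  have hD := antitone_sq_of_dualStep hc.le hlam hs
  have hbdd : BddBelow (Set.range fun k => (lam k - μ) ^ 2) :=
    ⟨0, by rintro _ ⟨k, rfl⟩; positivity⟩
  refine squeeze_zero hs (fun k => ?_)
    (by simpa using (tendsto_sub_succ_of_antitone hD hbdd).div_const (2 * c))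
  rw [le_div_iff₀ (by positivity), mul_comm]
  exact two_mul_mul_le_sq_sub_sq_of_dualStep hlam k

end DualStep

noncomputable section Lagrangian

variable {E : Type*} [AddCommGroup E] [Module ℝ E] {Y : Set E} {φ : E → ℝ} {g : E →ₗ[ℝ] ℝ}

def lagrangian (φ : E → ℝ) (g : E →ₗ[ℝ] ℝ) (z : E) (p : ℝ) : ℝ :=
  φ z - p * g z

def augmentedLagrangian (φ : E → ℝ) (g : E →ₗ[ℝ] ℝ) (c : ℝ) (z : E) (p : ℝ) : ℝ :=
  lagrangian φ g z p + c / 2 * g z ^ 2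

theorem isMinOn_lagrangian_of_isMinOn_augmentedLagrangian (hY : Convex ℝ Y) (hφ : ConvexOn ℝ Y φ)
    {c p : ℝ} {y : E} (hy : y ∈ Y) (hmin : IsMinOn (augmentedLagrangian φ g c · p) Y y) :
    IsMinOn (lagrangian φ g · (p - c * g y)) Y y := by
  refine isMinOn_iff.2 fun z hz => ?_
  -- on the segment `(1 - t) • y + t • z`, the penalty differs from its linearisation at `y`,
  -- which shifts the price by `c * g y`, only by `O(t²)`
  have hslope : ∀ t : ℝ, 0 < t → t ≤ 1 →
      lagrangian φ g y (p - c * g y) - lagrangian φ g z (p - c * g y) ≤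
        (c / 2 * (g z - g y) ^ 2) * t := by
    intro t ht0 ht1
    have hmem : (1 - t) • y + t • z ∈ Y := hY hy hz (by linarith) ht0.le (by ring)
    have hconv := hφ.2 hy hz (by linarith : (0 : ℝ) ≤ 1 - t) ht0.le (by ring)
    have hle := isMinOn_iff.1 hmin _ hmem
    simp only [augmentedLagrangian, lagrangian, map_add, map_smul, smul_eq_mul] at hconv hle ⊢
    refine le_of_mul_le_mul_left ?_ ht0
    linear_combination hle + hconv
  simpa [sub_nonpos] using nonpos_of_forall_le_mul hslope

variable {ys : E} {μ : ℝ}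

theorem IsSaddlePointOn.mul_map_nonneg (hs : IsSaddlePointOn Y Set.univ (lagrangian φ g) ys μ)
    (hys : ys ∈ Y) {p : ℝ} {y : E} (hy : y ∈ Y) (hmin : IsMinOn (lagrangian φ g · p) Y y) :
    0 ≤ (p - μ) * g y := by
  have hle : lagrangian φ g y p ≤ lagrangian φ g y μ :=
    (isMinOn_iff.1 hmin ys hys).trans (hs y hy p trivial)
  unfold lagrangian at hle
  linarith

theorem IsSaddlePointOn.le_lagrangian_add (hs : IsSaddlePointOn Y Set.univ (lagrangian φ g) ys μ)
    {p : ℝ} {y : E} (hy : y ∈ Y) (hmin : IsMinOn (lagrangian φ g · p) Y y) {z : E} (hz : z ∈ Y) :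
    lagrangian φ g ys μ ≤ lagrangian φ g z p + (p - μ) * g y := by
  have hle : lagrangian φ g ys μ ≤ lagrangian φ g y μ := hs y hy μ trivial
  have hmin' := isMinOn_iff.1 hmin z hz
  unfold lagrangian at hle hmin' ⊢
  linarith

theorem IsSaddlePointOn.exists_tendsto_of_augmentedLagrangian (hY : Convex ℝ Y)
    (hφ : ConvexOn ℝ Y φ) (hs : IsSaddlePointOn Y Set.univ (lagrangian φ g) ys μ) (hys : ys ∈ Y)
    {c : ℝ} (hc : 0 < c) {y : ℕ → E} {lam : ℕ → ℝ} (hymem : ∀ k, y (k + 1) ∈ Y)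
    (hymin : ∀ k, IsMinOn (augmentedLagrangian φ g c · (lam k)) Y (y (k + 1)))
    (hlam : ∀ k, lam (k + 1) = lam k - c * g (y (k + 1))) :
    ∃ lbar, Tendsto lam atTop (nhds lbar) ∧ IsSaddlePointOn Y Set.univ (lagrangian φ g) ys lbar := by
  have hmin k : IsMinOn (lagrangian φ g · (lam (k + 1))) Y (y (k + 1)) := by
    simpa only [hlam k] using
      isMinOn_lagrangian_of_isMinOn_augmentedLagrangian hY hφ (hymem k) (hymin k)
  have hstep {μ' : ℝ} (hs' : IsSaddlePointOn Y Set.univ (lagrangian φ g) ys μ') (k : ℕ) :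
      0 ≤ (lam (k + 1) - μ') * g (y (k + 1)) :=
    hs'.mul_map_nonneg hys (hymem k) (hmin k)
  have hbound k : lam (k + 1) ∈ Metric.closedBall μ (dist (lam 0) μ) :=
    antitone_dist_of_dualStep hc.le hlam (hstep hs) (Nat.zero_le _)
  obtain ⟨lbar, -, ψ, hψ, hlim⟩ := tendsto_subseq_of_bounded Metric.isBounded_closedBall hbound
  have hsbar : IsSaddlePointOn Y Set.univ (lagrangian φ g) ys lbar := by
    refine hs.of_forall_le hys fun z hz => ?_
    have herr := (tendsto_mul_zero_of_dualStep hc hlam (hstep hs)).comp hψ.tendsto_atTop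
    have hlimz : Tendsto (fun j => lagrangian φ g z (lam (ψ j + 1)) +
        (lam (ψ j + 1) - μ) * g (y (ψ j + 1))) atTop (nhds (lagrangian φ g z lbar)) := by
      simpa [lagrangian] using (tendsto_const_nhds.sub (hlim.mul_const (g z))).add herr
    exact ge_of_tendsto' hlimz fun j => hs.le_lagrangian_add (hymem (ψ j)) (hmin (ψ j)) hz
  refine ⟨lbar, tendsto_of_antitone_dist_of_tendsto_comp
    (antitone_dist_of_dualStep hc.le hlam (hstep hsbar)) ?_ hlim, hsbar⟩
  exact (tendsto_add_atTop_nat 1).comp hψ.tendsto_atTop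

end Lagrangian

theorem bidding_process_converges_abstract_general
    (n : ℕ)
    (Y : Set (Fin n → ℝ)) (hYconv : Convex ℝ Y)
    (φ : (Fin n → ℝ) → ℝ) (hφ : ConvexOn ℝ Set.univ φ)
    (v : Fin n → ℝ) (c : ℝ) (hc : 0 < c)
    -- the Lagrangian has a saddle point on Y × ℝ
    (hsaddle : ∃ ystar ∈ Y, ∃ lamstar : ℝ,
      (∀ lam : ℝ, φ ystar - lam * (∑ i, v i * ystar i) ≤
        φ ystar - lamstar * (∑ i, v i * ystar i)) ∧
      (∀ y ∈ Y, φ ystar - lamstar * (∑ i, v i * ystar i) ≤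
        φ y - lamstar * (∑ i, v i * y i)))
    -- the iterates
    (y : ℕ → (Fin n → ℝ)) (lam : ℕ → ℝ)
    (hymem : ∀ k : ℕ, y (k + 1) ∈ Y)
    (hymin : ∀ k : ℕ, ∀ z ∈ Y,
      φ (y (k + 1)) - lam k * (∑ i, v i * y (k + 1) i) +
          (c / 2) * (∑ i, v i * y (k + 1) i) ^ 2 ≤
        φ z - lam k * (∑ i, v i * z i) + (c / 2) * (∑ i, v i * z i) ^ 2)
    (hlam : ∀ k : ℕ, lam (k + 1) = lam k - c * (∑ i, v i * y (k + 1) i)) :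
    ∃ lamstar : ℝ, Tendsto lam atTop (nhds lamstar) ∧
      ∃ ystar ∈ Y,
        (∀ lam' : ℝ, φ ystar - lam' * (∑ i, v i * ystar i) ≤
          φ ystar - lamstar * (∑ i, v i * ystar i)) ∧
        (∀ z ∈ Y, φ ystar - lamstar * (∑ i, v i * ystar i) ≤
          φ z - lamstar * (∑ i, v i * z i)) := by
  let g : (Fin n → ℝ) →ₗ[ℝ] ℝ := dotProductBilin ℝ ℝ v
  obtain ⟨ystar, hys, μ, hsaddle⟩ := hsaddle
  have hs : IsSaddlePointOn Y Set.univ (lagrangian φ g) ystar μ :=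
    (isSaddlePointOn_univ_iff hys).2 hsaddle
  obtain ⟨lbar, hlim, hsbar⟩ := hs.exists_tendsto_of_augmentedLagrangian hYconv
    (hφ.subset (Set.subset_univ Y) hYconv) hys hc hymem (fun k => isMinOn_iff.2 (hymin k)) hlam
  exact ⟨lbar, hlim, ystar, hys, (isSaddlePointOn_univ_iff hys).1 hsbar⟩

/-- Abstract convergence of the energy sharing bidding process: the price iterates of
the dual-update algorithm converge to the price component of a saddle point of the
Lagrangian `L(y, λ) = φ(y) − λ⟨v, y⟩`. -/
theorem bidding_process_converges_abstract
    (n : ℕ) (hn : 1 ≤ n)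
    (Y : Set (Fin n → ℝ)) (hYne : Y.Nonempty) (hYconv : Convex ℝ Y)
    (hYcomp : IsCompact Y)
    (φ : (Fin n → ℝ) → ℝ) (hφcont : Continuous φ) (hφ : ConvexOn ℝ Set.univ φ)
    (v : Fin n → ℝ) (c : ℝ) (hc : 0 < c)
    -- the Lagrangian has a saddle point on Y × ℝ
    (hsaddle : ∃ ystar ∈ Y, ∃ lamstar : ℝ,
      (∀ lam : ℝ, φ ystar - lam * (∑ i, v i * ystar i) ≤
        φ ystar - lamstar * (∑ i, v i * ystar i)) ∧
      (∀ y ∈ Y, φ ystar - lamstar * (∑ i, v i * ystar i) ≤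
        φ y - lamstar * (∑ i, v i * y i)))
    -- the iterates
    (y : ℕ → (Fin n → ℝ)) (lam : ℕ → ℝ)
    (hymem : ∀ k : ℕ, y (k + 1) ∈ Y)
    (hymin : ∀ k : ℕ, ∀ z ∈ Y,
      φ (y (k + 1)) - lam k * (∑ i, v i * y (k + 1) i) +
          (c / 2) * (∑ i, v i * y (k + 1) i) ^ 2 ≤
        φ z - lam k * (∑ i, v i * z i) + (c / 2) * (∑ i, v i * z i) ^ 2)
    (hlam : ∀ k : ℕ, lam (k + 1) = lam k - c * (∑ i, v i * y (k + 1) i)) :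
    ∃ lamstar : ℝ, Tendsto lam atTop (nhds lamstar) ∧
      ∃ ystar ∈ Y,
        (∀ lam' : ℝ, φ ystar - lam' * (∑ i, v i * ystar i) ≤
          φ ystar - lamstar * (∑ i, v i * ystar i)) ∧
        (∀ z ∈ Y, φ ystar - lamstar * (∑ i, v i * ystar i) ≤
          φ z - lamstar * (∑ i, v i * z i)) :=
  bidding_process_converges_abstract_general n Y hYconv φ hφ v c hc hsaddle y lam hymem hymin hlam
end
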